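/- arXiv:1212.5443 — 5 statements merged into one kernel-verified Lean document; each statement's English description precedes it below -/
import Mathlib

section
/- Let (a,b) and (a',b) be two different loop-digraphic lists with a nonincreasing and a ≺ a'. Then the number of loop-digraph realizations satisfies N_1(a,b) > N_1(a',b). -/
open Finset

/-- Partial sum of the first `k` entries of `a`. -/
def partSum {n : ℕ} (a : Fin n → ℕ) (k : ℕ) : ℕ :=
  ∑ i : Fin n, if (i : ℕ) < k then a i else 0

/-- `a ≺ a'` : `a` is majorized by `a'`. -/
def Majorized {n : ℕ} (a a' : Fin n → ℕ) : Prop :=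
  (∀ k : ℕ, partSum a k ≤ partSum a' k) ∧ ∑ i, a i = ∑ i, a' i

/-- `a` is nonincreasing. -/
def Nonincreasing {n : ℕ} (a : Fin n → ℕ) : Prop :=
  ∀ i j : Fin n, i ≤ j → a j ≤ a i

/-- `b` is nondecreasing. -/
def Nondecreasing {n : ℕ} (b : Fin n → ℕ) : Prop :=
  ∀ i j : Fin n, i ≤ j → b i ≤ b j

/-- `a` is obtained from `a'` by a unit `(i,j)`-transfer. -/
def UnitTransfer {n : ℕ} (a' a : Fin n → ℕ) (i j : Fin n) : Prop :=
  i < j ∧ a' j + 2 ≤ a' i ∧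
  a = Function.update (Function.update a' i (a' i - 1)) j (a' j + 1)

/-- Row sum of a 0-1 matrix. -/
def rowSum {n : ℕ} (M : Fin n → Fin n → Bool) (i : Fin n) : ℕ :=
  ∑ j, if M i j then 1 else 0

/-- Column sum of a 0-1 matrix. -/
def colSum {n : ℕ} (M : Fin n → Fin n → Bool) (j : Fin n) : ℕ :=
  ∑ i, if M i j then 1 else 0

/-- Number of loop-digraph realizations of `(a,b)`:
`n×n` 0-1 matrices with row sums `b` and column sums `a`. -/
noncomputable def N1 {n : ℕ} (a b : Fin n → ℕ) : ℕ :=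
  Nat.card {M : Fin n → Fin n → Bool //
    (∀ i, rowSum M i = b i) ∧ (∀ j, colSum M j = a j)}

def LoopDigraphic {n : ℕ} (a b : Fin n → ℕ) : Prop := 0 < N1 a b

/-- Number of digraph realizations of `(a,b)`:
`n×n` 0-1 matrices with zero diagonal, row sums `b` and column sums `a`. -/
noncomputable def N2 {n : ℕ} (a b : Fin n → ℕ) : ℕ :=
  Nat.card {M : Fin n → Fin n → Bool //
    (∀ i, M i i = false) ∧ (∀ i, rowSum M i = b i) ∧ (∀ j, colSum M j = a j)}

def Digraphic {n : ℕ} (a b : Fin n → ℕ) : Prop := 0 < N2 a b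

/-- Number of simple graph realizations of `a` (symmetric 0-1 adjacency matrices
with zero diagonal and degrees `a`). -/
noncomputable def N3 {n : ℕ} (a : Fin n → ℕ) : ℕ :=
  Nat.card {M : Fin n → Fin n → Bool //
    (∀ i j, M i j = M j i) ∧ (∀ i, M i i = false) ∧ (∀ i, rowSum M i = a i)}

def Graphic {n : ℕ} (a : Fin n → ℕ) : Prop := 0 < N3 a

/-- The minconvex list for parameters `n, m`. -/
def minconvex (n m : ℕ) : Fin n → ℕ :=
  fun i => if (i : ℕ) < m % n then m / n + 1 else m / n

/-- `(a,b)` is lexicographically nonincreasing. -/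
def LexNonincreasing {n : ℕ} (a b : Fin n → ℕ) : Prop :=
  ∀ i j : Fin n, i ≤ j → (a j < a i ∨ (a i = a j ∧ b j ≤ b i))


section Count
variable {n : ℕ}

def RSet (a b : Fin n → ℕ) : Finset (Fin n → Fin n → Bool) :=
  univ.filter (fun M => (∀ r, rowSum M r = b r) ∧ (∀ k, colSum M k = a k))

lemma N1_eq (a b : Fin n → ℕ) : N1 a b = (RSet a b).card := by
  rw [N1, Nat.card_eq_fintype_card, Fintype.card_subtype, RSet]

def skel (i j : Fin n) (M : Fin n → Fin n → Bool) : Fin n → Fin n → Bool :=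
  fun r k => if k = i then (M r i && M r j) else if k = j then (M r i != M r j) else M r k

def bld (i j : Fin n) (s : Fin n → Fin n → Bool) (X : Finset (Fin n)) :
    Fin n → Fin n → Bool :=
  fun r k => if k = i then (s r i || (s r j && decide (r ∈ X)))
    else if k = j then (s r i || (s r j && !(decide (r ∈ X)))) else s r k

def Tset (j : Fin n) (s : Fin n → Fin n → Bool) : Finset (Fin n) :=
  univ.filter (fun r => s r j = true)

def fval (i : Fin n) (s : Fin n → Fin n → Bool) : ℕ :=
  (univ.filter (fun r => s r i = true)).card

def Xof (i j : Fin n) (M : Fin n → Fin n → Bool) : Finset (Fin n) :=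
  univ.filter (fun r => M r i = true ∧ M r j = false)

def Good1 (i j : Fin n) (s : Fin n → Fin n → Bool) : Prop :=
  ∀ r, ¬(s r i = true ∧ s r j = true)

variable {i j : Fin n}

lemma skel_good (hij : i ≠ j) (M : Fin n → Fin n → Bool) : Good1 i j (skel i j M) := by
  intro r
  simp only [skel, if_pos rfl, if_neg (Ne.symm hij)]
  cases M r i <;> cases M r j <;> simp [Ne.symm hij]

lemma bld_skel (hij : i ≠ j) (s : Fin n → Fin n → Bool) (hG : Good1 i j s) (X : Finset (Fin n)) :
    skel i j (bld i j s X) = s := by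
  funext r k
  have hGr := hG r
  by_cases hk1 : k = i
  · simp only [skel, bld, if_pos hk1, if_pos rfl, if_neg (Ne.symm hij), if_neg hij]
    cases hsi : s r i <;> cases hsj : s r j <;> cases hx : decide (r ∈ X) <;> simp_all
  · by_cases hk2 : k = j
    · simp only [skel, bld, if_neg hk1, if_pos hk2, if_pos rfl, if_neg (Ne.symm hij), if_neg hij]
      cases hsi : s r i <;> cases hsj : s r j <;> cases hx : decide (r ∈ X) <;> simp_all
    · simp only [skel, bld, if_neg hk1, if_neg hk2]

lemma bld_Xof (hij : i ≠ j) (M : Fin n → Fin n → Bool) :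
    bld i j (skel i j M) (Xof i j M) = M := by
  funext r k
  have hmem : decide (r ∈ Xof i j M) = (M r i && !(M r j)) := by
    simp [Xof]
  by_cases hk1 : k = i
  · simp only [bld, skel, if_pos hk1, if_pos rfl, if_neg (Ne.symm hij), if_neg hij, hmem]
    cases hMi : M r i <;> cases hMj : M r j <;> simp_all
  · by_cases hk2 : k = j
    · simp only [bld, skel, if_neg hk1, if_pos hk2, if_pos rfl, if_neg (Ne.symm hij), if_neg hij, hmem]
      cases hMi : M r i <;> cases hMj : M r j <;> simp_all
    · simp only [bld, skel, if_neg hk1, if_neg hk2]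

lemma Xof_subset (hij : i ≠ j) (M : Fin n → Fin n → Bool) :
    Xof i j M ⊆ Tset j (skel i j M) := by
  intro r hr
  simp only [Xof, mem_filter, mem_univ, true_and] at hr
  simp only [Tset, mem_filter, mem_univ, true_and, skel, if_pos rfl, if_neg (Ne.symm hij)]
  simp [hr.1, hr.2]

lemma bld_injOn (hij : i ≠ j) (s : Fin n → Fin n → Bool) (hG : Good1 i j s)
    {X Y : Finset (Fin n)} (hX : X ⊆ Tset j s) (hY : Y ⊆ Tset j s)
    (h : bld i j s X = bld i j s Y) : X = Y := by
  ext r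
  constructor
  · intro hr
    have hsj : s r j = true := by simpa [Tset] using hX hr
    have hsi : s r i = false := by
      have := hG r; cases hsi : s r i; · rfl
      · exact absurd ⟨hsi, hsj⟩ this
    have := congrFun (congrFun h r) i
    simp only [bld, if_pos rfl, hsi, hsj] at this
    simp [hr] at this
    exact this
  · intro hr
    have hsj : s r j = true := by simpa [Tset] using hY hr
    have hsi : s r i = false := by
      have := hG r; cases hsi : s r i; · rfl
      · exact absurd ⟨hsi, hsj⟩ this
    have := congrFun (congrFun h r) i
    simp only [bld, if_pos rfl, hsi, hsj] at this
    simp [hr] at this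
    exact this

lemma sum_split (hij : i ≠ j) (g : Fin n → ℕ) :
    ∑ k, g k = g i + g j + ∑ k ∈ (univ.erase i).erase j, g k := by
  rw [← Finset.add_sum_erase univ g (mem_univ i),
    ← Finset.add_sum_erase (univ.erase i) g
      (Finset.mem_erase.2 ⟨Ne.symm hij, mem_univ j⟩), add_assoc]

lemma rowSum_bld (hij : i ≠ j) (s : Fin n → Fin n → Bool) (hG : Good1 i j s)
    (X : Finset (Fin n)) (r : Fin n) :
    rowSum (bld i j s X) r = rowSum s r + (if s r i = true then 1 else 0) := by
  unfold rowSum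
  rw [sum_split hij, sum_split hij (g := fun k => if s r k then 1 else 0)]
  have h1 : ∀ k ∈ (univ.erase i).erase j,
      (if bld i j s X r k then (1:ℕ) else 0) = (if s r k then 1 else 0) := by
    intro k hk
    rw [Finset.mem_erase, Finset.mem_erase] at hk
    simp [bld, hk.1, hk.2.1]
  rw [Finset.sum_congr rfl h1]
  have hGr := hG r
  simp only [bld, if_pos rfl, if_neg (Ne.symm hij)]
  cases hsi : s r i <;> cases hsj : s r j <;> cases hx : decide (r ∈ X) <;> simp_all <;> omega

lemma card_eq_sum_ite (X : Finset (Fin n)) :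
    X.card = ∑ r : Fin n, if r ∈ X then 1 else 0 := by
  rw [← Finset.card_filter]
  congr 1
  rw [Finset.filter_mem_eq_inter, Finset.univ_inter]

lemma colSum_bld_i (hij : i ≠ j) (s : Fin n → Fin n → Bool) (hG : Good1 i j s)
    {X : Finset (Fin n)} (hX : X ⊆ Tset j s) :
    colSum (bld i j s X) i = fval i s + X.card := by
  unfold colSum
  have h1 : ∀ r ∈ univ, (if bld i j s X r i then (1:ℕ) else 0)
      = (if s r i = true then 1 else 0) + (if r ∈ X then 1 else 0) := by
    intro r _
    have hGr := hG r
    by_cases hr : r ∈ X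
    · have hsj : s r j = true := by simpa [Tset] using hX hr
      have hsi : s r i = false := by
        cases hsi : s r i; · rfl
        · exact absurd ⟨hsi, hsj⟩ hGr
      simp [bld, hsi, hsj, hr]
    · simp only [bld, if_pos rfl]
      cases hsi : s r i <;> simp [hr]
  rw [Finset.sum_congr rfl h1, Finset.sum_add_distrib]
  congr 1
  · rw [fval, Finset.card_filter]
  · exact (card_eq_sum_ite X).symm

lemma colSum_bld_j (hij : i ≠ j) (s : Fin n → Fin n → Bool) (hG : Good1 i j s)
    {X : Finset (Fin n)} (hX : X ⊆ Tset j s) :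
    colSum (bld i j s X) j + X.card = fval i s + (Tset j s).card := by
  unfold colSum
  rw [card_eq_sum_ite X, ← Finset.sum_add_distrib]
  have hT : (Tset j s).card = ∑ r : Fin n, if s r j = true then 1 else 0 := by
    rw [Tset, Finset.card_filter]
  rw [fval, Finset.card_filter, hT, ← Finset.sum_add_distrib]
  apply Finset.sum_congr rfl
  intro r _
  have hGr := hG r
  by_cases hr : r ∈ X
  · have hsj : s r j = true := by simpa [Tset] using hX hr
    have hsi : s r i = false := by
      cases hsi : s r i; · rfl
      · exact absurd ⟨hsi, hsj⟩ hGr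
    simp [bld, hsi, hsj, hr, if_neg (Ne.symm hij)]
  · simp only [bld, if_pos rfl, if_neg (Ne.symm hij)]
    cases hsi : s r i <;> cases hsj : s r j <;> simp_all

lemma colSum_bld_off (s : Fin n → Fin n → Bool) (X : Finset (Fin n))
    {k : Fin n} (hk1 : k ≠ i) (hk2 : k ≠ j) :
    colSum (bld i j s X) k = colSum s k := by
  unfold colSum
  apply Finset.sum_congr rfl
  intro r _
  simp [bld, hk1, hk2]

lemma colSum_skel_off (M : Fin n → Fin n → Bool)
    {k : Fin n} (hk1 : k ≠ i) (hk2 : k ≠ j) :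
    colSum (skel i j M) k = colSum M k := by
  unfold colSum
  apply Finset.sum_congr rfl
  intro r _
  simp [skel, hk1, hk2]

end Count

section Count2
variable {n : ℕ} {i j : Fin n}

lemma fib_eq (hij : i ≠ j) (b c : Fin n → ℕ) (s : Fin n → Fin n → Bool) (m : ℕ)
    (hG : Good1 i j s)
    (hrow : ∀ r, rowSum s r + (if s r i = true then 1 else 0) = b r)
    (hoff : ∀ k, k ≠ i → k ≠ j → colSum s k = c k)
    (hm : m ≤ (Tset j s).card)
    (hmi : fval i s + m = c i)
    (hmj : fval i s + (Tset j s).card = c j + m) :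
    (RSet c b).filter (fun M => skel i j M = s)
      = (powersetCard m (Tset j s)).image (bld i j s) := by
  ext M
  simp only [Finset.mem_filter, Finset.mem_image, Finset.mem_powersetCard, RSet,
    Finset.mem_univ, true_and]
  constructor
  · rintro ⟨⟨hrows, hcols⟩, hs⟩
    refine ⟨Xof i j M, ⟨?_, ?_⟩, ?_⟩
    · rw [← hs]; exact Xof_subset hij M
    · have h := hcols i
      rw [← bld_Xof hij M, hs] at h
      rw [colSum_bld_i hij s hG (by rw [← hs]; exact Xof_subset hij M)] at h
      omega
    · rw [← hs]; exact bld_Xof hij M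
  · rintro ⟨X, ⟨hXT, hXm⟩, rfl⟩
    refine ⟨⟨?_, ?_⟩, bld_skel hij s hG X⟩
    · intro r; rw [rowSum_bld hij s hG X r]; exact hrow r
    · intro k
      by_cases hk1 : k = i
      · subst hk1; rw [colSum_bld_i hij s hG hXT, hXm]; exact hmi
      · by_cases hk2 : k = j
        · subst hk2
          have h := colSum_bld_j hij s hG hXT
          rw [hXm] at h
          omega
        · rw [colSum_bld_off s X hk1 hk2]; exact hoff k hk1 hk2

lemma fib_card (hij : i ≠ j) (b c : Fin n → ℕ) (s : Fin n → Fin n → Bool) (m : ℕ)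
    (hG : Good1 i j s)
    (hrow : ∀ r, rowSum s r + (if s r i = true then 1 else 0) = b r)
    (hoff : ∀ k, k ≠ i → k ≠ j → colSum s k = c k)
    (hm : m ≤ (Tset j s).card)
    (hmi : fval i s + m = c i)
    (hmj : fval i s + (Tset j s).card = c j + m) :
    ((RSet c b).filter (fun M => skel i j M = s)).card
      = Nat.choose (Tset j s).card m := by
  rw [fib_eq hij b c s m hG hrow hoff hm hmi hmj,
    Finset.card_image_of_injOn, Finset.card_powersetCard]
  intro X hX Y hY h
  rw [Finset.mem_coe, Finset.mem_powersetCard] at hX hY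
  exact bld_injOn hij s hG hX.1 hY.1 h

lemma choose_lt {t x : ℕ} (hxt : x ≤ t) (h2 : t + 2 ≤ 2 * x) :
    Nat.choose t x < Nat.choose t (x - 1) := by
  set k := t - x with hk
  have h1 : Nat.choose t x = Nat.choose t k := by
    rw [hk, Nat.choose_symm hxt]
  have h2' : t - (x - 1) = k + 1 := by omega
  have h3 : Nat.choose t (x - 1) = Nat.choose t (k + 1) := by
    rw [← h2', Nat.choose_symm (by omega)]
  rw [h1, h3]
  have h4 := Nat.choose_succ_right_eq t k
  have h5 : t - k = x := by omega
  rw [h5] at h4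
  have h6 : 0 < Nat.choose t k := Nat.choose_pos (by omega)
  have h7 : Nat.choose t k * (k + 1) < Nat.choose t (k + 1) * (k + 1) := by
    rw [h4]
    exact Nat.mul_lt_mul_of_le_of_lt (le_refl _) (by omega) h6
  exact lt_of_mul_lt_mul_right h7 (Nat.zero_le _)

lemma transfer_lt (b a' : Fin n → ℕ) (hij : i ≠ j) (h2 : a' j + 2 ≤ a' i)
    (hpos : 0 < N1 a' b) :
    N1 a' b < N1 (Function.update (Function.update a' i (a' i - 1)) j (a' j + 1)) b := by
  classical
  set c := Function.update (Function.update a' i (a' i - 1)) j (a' j + 1) with hc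
  have hci : c i = a' i - 1 := by
    rw [hc, Function.update_of_ne hij, Function.update_self]
  have hcj : c j = a' j + 1 := by
    rw [hc, Function.update_self]
  have hcoff : ∀ k, k ≠ i → k ≠ j → c k = a' k := by
    intro k hk1 hk2
    rw [hc, Function.update_of_ne hk2, Function.update_of_ne hk1]
  rw [N1_eq, N1_eq,
    Finset.card_eq_sum_card_fiberwise (f := skel i j) (t := univ) (fun x _ => mem_univ _),
    Finset.card_eq_sum_card_fiberwise (f := skel i j) (t := univ) (fun x _ => mem_univ _)]
  have key : ∀ s, ((RSet a' b).filter (fun M => skel i j M = s)).Nonempty →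
      ((RSet a' b).filter (fun M => skel i j M = s)).card
        < ((RSet c b).filter (fun M => skel i j M = s)).card := by
    intro s ⟨M0, hM0⟩
    rw [Finset.mem_filter] at hM0
    obtain ⟨hM0R, hM0s⟩ := hM0
    subst hM0s
    rw [RSet, Finset.mem_filter] at hM0R
    obtain ⟨-, hrows, hcols⟩ := hM0R
    set s := skel i j M0 with hs
    have hG : Good1 i j s := skel_good hij M0
    have hXsub : Xof i j M0 ⊆ Tset j s := Xof_subset hij M0
    set x := (Xof i j M0).card with hx
    set t := (Tset j s).card with ht
    set f := fval i s with hf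
    have hrow : ∀ r, rowSum s r + (if s r i = true then 1 else 0) = b r := by
      intro r
      rw [← rowSum_bld hij s hG (Xof i j M0) r, bld_Xof hij M0]
      exact hrows r
    have hoff : ∀ k, k ≠ i → k ≠ j → colSum s k = a' k := by
      intro k hk1 hk2
      rw [hs, colSum_skel_off M0 hk1 hk2]
      exact hcols k
    have hoffc : ∀ k, k ≠ i → k ≠ j → colSum s k = c k := by
      intro k hk1 hk2
      rw [hcoff k hk1 hk2]
      exact hoff k hk1 hk2
    have e_i : f + x = a' i := by
      have h := hcols i
      rw [← bld_Xof hij M0, colSum_bld_i hij s hG hXsub] at h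
      exact h
    have e_j : a' j + x = f + t := by
      have h := colSum_bld_j hij s hG hXsub
      rw [bld_Xof hij M0, hcols j] at h
      exact h
    have hxt : x ≤ t := Finset.card_le_card hXsub
    have hkey : t + 2 ≤ 2 * x := by omega
    have hx1 : 1 ≤ x := by omega
    rw [fib_card hij b a' s x hG hrow hoff hxt e_i (by omega),
      fib_card hij b c s (x - 1) hG hrow hoffc (by omega) (by omega) (by omega)]
    exact choose_lt hxt hkey
  apply Finset.sum_lt_sum
  · intro s _
    rcases Finset.eq_empty_or_nonempty ((RSet a' b).filter (fun M => skel i j M = s)) with h | h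
    · simp [h]
    · exact (key s h).le
  · rw [N1_eq] at hpos
    obtain ⟨M0, hM0⟩ := Finset.card_pos.mp hpos
    exact ⟨skel i j M0, mem_univ _, key _ ⟨M0, Finset.mem_filter.2 ⟨hM0, rfl⟩⟩⟩

end Count2

section Maj
variable {n : ℕ}

lemma partSum_succ (a : Fin n → ℕ) (k : Fin n) :
    partSum a ((k : ℕ) + 1) = partSum a (k : ℕ) + a k := by
  unfold partSum
  have h : ∀ m : Fin n, (if (m : ℕ) < (k : ℕ) + 1 then a m else 0)
      = (if (m : ℕ) < (k : ℕ) then a m else 0) + (if m = k then a m else 0) := by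
    intro m
    by_cases h2 : m = k
    · subst h2; simp
    · have hne : (m : ℕ) ≠ (k : ℕ) := fun h => h2 (Fin.ext h)
      by_cases h1 : (m : ℕ) < (k : ℕ)
      · rw [if_pos (by omega), if_pos h1, if_neg h2, add_zero]
      · rw [if_neg (by omega), if_neg h1, if_neg h2, add_zero]
  rw [Finset.sum_congr rfl (fun m _ => h m), Finset.sum_add_distrib,
    Finset.sum_ite_eq' univ k a, if_pos (mem_univ k)]

lemma partSum_ge (a : Fin n → ℕ) {k : ℕ} (hk : n ≤ k) : partSum a k = ∑ i, a i :=
  Finset.sum_congr rfl fun i _ => if_pos (lt_of_lt_of_le i.isLt hk)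

lemma partSum_update (f : Fin n → ℕ) (p : Fin n) (v : ℕ) (k : ℕ) :
    partSum (Function.update f p v) k + (if (p : ℕ) < k then f p else 0)
      = partSum f k + (if (p : ℕ) < k then v else 0) := by
  unfold partSum
  have hfun : ∀ m : Fin n, (if (m : ℕ) < k then Function.update f p v m else 0)
      = Function.update (fun m : Fin n => if (m : ℕ) < k then f m else 0) p
          (if (p : ℕ) < k then v else 0) m := by
    intro m
    by_cases hm : m = p
    · subst hm; simp
    · simp [Function.update_of_ne hm]
  rw [Finset.sum_congr rfl (fun m _ => hfun m), Finset.sum_update_of_mem (mem_univ p)]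
  rw [← Finset.add_sum_erase univ (fun m : Fin n => if (m : ℕ) < k then f m else 0) (mem_univ p)]
  rw [Finset.sdiff_singleton_eq_erase]
  ring

def meas (a a' : Fin n → ℕ) : ℕ :=
  ∑ k ∈ Finset.range (n + 1), (partSum a' k - partSum a k)

lemma key_lemma (b : Fin n → ℕ) : ∀ N (a a' : Fin n → ℕ), meas a a' ≤ N →
    0 < N1 a' b → a ≠ a' → Nonincreasing a → Majorized a a' → N1 a' b < N1 a b := by
  intro N
  induction N with
  | zero =>
    intro a a' hm _ hne _ hmaj
    exfalso
    apply hne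
    have hz : ∀ k, k ≤ n → partSum a k = partSum a' k := by
      intro k hk
      have h1 := hmaj.1 k
      have h2 : partSum a' k - partSum a k = 0 := by
        have := Nat.le_zero.mp hm
        rw [meas] at this
        have := Finset.sum_eq_zero_iff.mp this k (Finset.mem_range.2 (by omega))
        exact this
      omega
    funext m
    have e1 := partSum_succ a m
    have e2 := partSum_succ a' m
    have h1 := hz (m : ℕ) (by omega)
    have h2 := hz ((m : ℕ) + 1) (by have := m.isLt; omega)
    omega
  | succ N ih =>
    intro a a' hm hpos hne hmono hmaj
    classical
    have hS : (univ.filter (fun m : Fin n => a m ≠ a' m)).Nonempty := by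
      by_contra h
      rw [Finset.not_nonempty_iff_eq_empty, Finset.filter_eq_empty_iff] at h
      exact hne (funext fun m => by_contra fun hm' => h (mem_univ m) hm')
    set i := (univ.filter (fun m : Fin n => a m ≠ a' m)).min' hS with hi
    have hiS : a i ≠ a' i :=
      (Finset.mem_filter.1 ((univ.filter (fun m : Fin n => a m ≠ a' m)).min'_mem hS)).2
    have hlow : ∀ m : Fin n, m < i → a m = a' m := by
      intro m hm'
      by_contra h
      exact absurd (Finset.min'_le _ m (Finset.mem_filter.2 ⟨mem_univ _, h⟩)) (not_le.2 hm')
    have hps_eq_low : ∀ k : ℕ, k ≤ (i : ℕ) → partSum a k = partSum a' k := by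
      intro k hk
      unfold partSum
      apply Finset.sum_congr rfl
      intro m _
      by_cases h : (m : ℕ) < k
      · rw [hlow m (by rw [Fin.lt_def]; omega)]
      · simp [h]
    have hai : a i < a' i := by
      have h1 := hmaj.1 ((i : ℕ) + 1)
      rw [partSum_succ a i, partSum_succ a' i, hps_eq_low (i : ℕ) le_rfl] at h1
      omega
    have hTne : (univ.filter (fun m : Fin n => i < m ∧ a' m < a m)).Nonempty := by
      by_contra h
      rw [Finset.not_nonempty_iff_eq_empty, Finset.filter_eq_empty_iff] at h
      have hlt : ∑ m, a m < ∑ m, a' m := by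
        apply Finset.sum_lt_sum
        · intro m _
          rcases lt_trichotomy m i with h' | h' | h'
          · exact (hlow m h').le
          · subst h'; exact hai.le
          · by_contra hcon
            exact h (mem_univ m) ⟨h', by omega⟩
        · exact ⟨i, mem_univ _, hai⟩
      have := hmaj.2
      omega
    set j := (univ.filter (fun m : Fin n => i < m ∧ a' m < a m)).min' hTne with hj
    have hjmem := Finset.mem_filter.1
      ((univ.filter (fun m : Fin n => i < m ∧ a' m < a m)).min'_mem hTne)
    have hj1 : i < j := hjmem.2.1
    have hj2 : a' j < a j := hjmem.2.2
    have hmid : ∀ m : Fin n, i < m → m < j → a m ≤ a' m := by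
      intro m h1 h2
      by_contra h
      exact absurd (Finset.min'_le _ m (Finset.mem_filter.2 ⟨mem_univ _, h1, by omega⟩))
        (not_le.2 h2)
    have h2 : a' j + 2 ≤ a' i := by
      have := hmono i j hj1.le
      omega
    have hstrict : ∀ k : ℕ, (i : ℕ) < k → k ≤ (j : ℕ) → partSum a k < partSum a' k := by
      intro k hk1 hk2
      unfold partSum
      apply Finset.sum_lt_sum
      · intro m _
        by_cases h : (m : ℕ) < k
        · rw [if_pos h, if_pos h]
          rcases lt_trichotomy m i with h' | h' | h'
          · exact (hlow m h').le
          · subst h'; exact hai.le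
          · exact hmid m h' (by rw [Fin.lt_def]; omega)
        · simp [h]
      · exact ⟨i, mem_univ _, by rw [if_pos hk1, if_pos hk1]; exact hai⟩
    have hij : i ≠ j := ne_of_lt hj1
    set c := Function.update (Function.update a' i (a' i - 1)) j (a' j + 1) with hc
    have hcs : ∀ k : ℕ, partSum c k
        + (if (i : ℕ) < k ∧ k ≤ (j : ℕ) then 1 else 0) = partSum a' k := by
      intro k
      have e1 := partSum_update (Function.update a' i (a' i - 1)) j (a' j + 1) k
      rw [Function.update_of_ne (Ne.symm hij), ← hc] at e1
      have e2 := partSum_update a' i (a' i - 1) k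
      have hij' : (i : ℕ) < (j : ℕ) := hj1
      by_cases hcnd1 : (i : ℕ) < k
      · by_cases hcnd2 : (j : ℕ) < k
        · rw [if_neg (by omega)]
          simp only [if_pos hcnd1, if_pos hcnd2] at e1 e2
          omega
        · rw [if_pos ⟨hcnd1, by omega⟩]
          simp only [if_pos hcnd1, if_neg hcnd2] at e1 e2
          omega
      · have hcnd2 : ¬(j : ℕ) < k := by omega
        rw [if_neg (by omega)]
        simp only [if_neg hcnd1, if_neg hcnd2] at e1 e2
        omega
    have hmaj_c : Majorized a c := by
      constructor
      · intro k
        have h := hcs k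
        by_cases hcnd : (i : ℕ) < k ∧ k ≤ (j : ℕ)
        · have := hstrict k hcnd.1 hcnd.2
          rw [if_pos hcnd] at h
          omega
        · rw [if_neg hcnd, add_zero] at h
          rw [h]
          exact hmaj.1 k
      · have h := hcs (n + 1)
        have hcnd : ¬((i : ℕ) < n + 1 ∧ n + 1 ≤ (j : ℕ)) := by
          have := j.isLt
          omega
        rw [if_neg hcnd, add_zero] at h
        rw [hmaj.2, ← partSum_ge a' (Nat.le_succ n), ← h, partSum_ge c (Nat.le_succ n)]
    have htrans := transfer_lt b a' hij h2 hpos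
    rw [← hc] at htrans
    by_cases hac : a = c
    · rw [hac]
      exact htrans
    · have hmeas : meas a c ≤ N := by
        have hlt : meas a c < meas a a' := by
          unfold meas
          apply Finset.sum_lt_sum
          · intro k _
            have h := hcs k
            have h2' := hmaj.1 k
            by_cases hcnd : (i : ℕ) < k ∧ k ≤ (j : ℕ) <;>
              [rw [if_pos hcnd] at h; rw [if_neg hcnd, add_zero] at h] <;> omega
          · refine ⟨(i : ℕ) + 1, Finset.mem_range.2 (by have := i.isLt; omega), ?_⟩
            have hcnd : (i : ℕ) < (i : ℕ) + 1 ∧ (i : ℕ) + 1 ≤ (j : ℕ) := by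
              have : (i : ℕ) < (j : ℕ) := hj1
              omega
            have h := hcs ((i : ℕ) + 1)
            rw [if_pos hcnd] at h
            have := hstrict ((i : ℕ) + 1) hcnd.1 hcnd.2
            omega
        omega
      exact lt_trans htrans (ih a c hmeas (lt_trans hpos htrans) hac hmono hmaj_c)


theorem stmt10 {n : ℕ} (a a' b : Fin n → ℕ)
    (hd : LoopDigraphic a b) (hd' : LoopDigraphic a' b) (hne : a ≠ a')
    (hmono : Nonincreasing a) (hmaj : Majorized a a') :
    N1 a' b < N1 a b := by
  exact key_lemma b (meas a a') a a' le_rfl hd' hne hmono hmaj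
end Maj
end

section
/- Let n and m be fixed with m ≤ n². Let (a,b) be any loop-digraphic list with a nonincreasing and Σa_i = m which is not a minconvex list. Then for any permutation σ, the minconvex list (α, α_σ) satisfies N_1(α, α_σ) > N_1(a,b), i.e., minconvex lists have strictly more loop-digraph realizations. -/
open Finset

/-!
Moving one unit from a column sum `a i` to a column sum `a j` with `a j + 2 ≤ a i` strictly
increases `N1`. To count, sort each realization in columns `i, j` row by row, so that a row
with a single `1` among them has it in column `j`. A sorted matrix `R` with `t` such rows is the
image of exactly `t.choose (a i - colSum R i)` realizations; the transfer lowers the bottom index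
by one while it stays at least `t / 2`, where binomial coefficients decrease. Iterating transfers
makes the column sums balanced, i.e. a permutation of the minconvex list, and by transposition
the same holds for the row sums. If `(a, b)` is not minconvex, one of the two lists is
unbalanced (for the nonincreasing `a`, balanced means `a = minconvex n m`), which makes one of
the steps strict.
-/

open Finset

variable {n : ℕ}

def realizations (a b : Fin n → ℕ) : Finset (Fin n → Fin n → Bool) :=
  {M | (∀ i, rowSum M i = b i) ∧ (∀ j, colSum M j = a j)}

lemma N1_eq_card_realizations (a b : Fin n → ℕ) : N1 a b = #(realizations a b) := by
  rw [N1, Nat.card_eq_fintype_card, Fintype.card_subtype, realizations]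

lemma N1_comm (a b : Fin n → ℕ) : N1 a b = N1 b a :=
  Nat.card_congr <| (Equiv.piComm _).subtypeEquiv fun _ => and_comm

lemma N1_comp_perm_right (a b : Fin n → ℕ) (σ : Equiv.Perm (Fin n)) :
    N1 a (b ∘ σ) = N1 a b := by
  refine Nat.card_congr <| (σ.arrowCongr (Equiv.refl _)).subtypeEquiv fun M => ?_
  refine and_congr ⟨fun h r => by simpa [rowSum] using h (σ.symm r),
    fun h r => by simpa [rowSum] using h (σ r)⟩ (forall_congr' fun c => ?_)
  simp only [colSum, Equiv.arrowCongr_apply, Equiv.coe_refl, Function.comp_apply, id]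
  rw [Equiv.sum_comp σ.symm (fun r => if M r c then 1 else 0)]

lemma N1_comp_perm_left (a b : Fin n → ℕ) (σ : Equiv.Perm (Fin n)) :
    N1 (a ∘ σ) b = N1 a b := by
  rw [N1_comm, N1_comp_perm_right, N1_comm]

lemma sum_eq_sum_of_N1_pos {a b : Fin n → ℕ} (h : 0 < N1 a b) : ∑ i, b i = ∑ j, a j := by
  obtain ⟨M, hM⟩ := card_pos.mp (N1_eq_card_realizations a b ▸ h)
  obtain ⟨hrow, hcol⟩ := (mem_filter.mp hM).2
  simp only [← hrow, ← hcol, rowSum, colSum]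
  exact sum_comm

def IsBalanced (c : Fin n → ℕ) : Prop := ∀ i j, c i ≤ c j + 1

lemma lt_apply_iff_lt_card_of_nonincreasing {c : Fin n → ℕ} (hc : Nonincreasing c) (w : ℕ)
    (i : Fin n) : w < c i ↔ (i : ℕ) < #({k | w < c k} : Finset (Fin n)) := by
  constructor
  · intro hi
    have hsub : Iic i ⊆ ({k | w < c k} : Finset (Fin n)) := fun k hk =>
      mem_filter.mpr ⟨mem_univ k, hi.trans_le (hc k i (mem_Iic.mp hk))⟩
    simpa using card_le_card hsub
  · intro hi
    by_contra hwi
    have hsub : ({k | w < c k} : Finset (Fin n)) ⊆ Iio i := fun k hk =>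
      mem_Iio.mpr <| lt_of_not_ge fun hik => hwi ((mem_filter.mp hk).2.trans_le (hc i k hik))
    simpa using hi.trans_le (card_le_card hsub)

lemma eq_minconvex_of_isBalanced_of_nonincreasing {c : Fin n → ℕ} (hbal : IsBalanced c)
    (hc : Nonincreasing c) : c = minconvex n (∑ i, c i) := by
  rcases n with _ | n
  · exact funext fun i => i.elim0
  set w := c (Fin.last n)
  set T : Finset (Fin (n + 1)) := {k | w < c k}
  have hval : ∀ i, c i = w + if w < c i then 1 else 0 := fun i => by
    have := hc i _ (Fin.le_last i)
    have := hbal i (Fin.last n)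
    split_ifs <;> omega
  have hT : #T < n + 1 := by
    simpa using card_lt_univ_of_notMem (s := T) (x := Fin.last n) (by simp [T, w])
  have hsum : ∑ i, c i = (n + 1) * w + #T := by
    rw [sum_congr rfl fun i _ => hval i, sum_add_distrib, sum_boole]
    simp [T]
  have hdiv : (∑ i, c i) / (n + 1) = w := by
    rw [hsum, Nat.mul_add_div n.succ_pos, Nat.div_eq_of_lt hT, add_zero]
  have hmod : (∑ i, c i) % (n + 1) = #T := by
    rw [hsum, Nat.mul_add_mod, Nat.mod_eq_of_lt hT]
  funext i
  have := hval i
  simp only [minconvex, hdiv, hmod, T, ← lt_apply_iff_lt_card_of_nonincreasing hc w i]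
  split_ifs at this ⊢ <;> omega

lemma IsBalanced.exists_perm_eq_minconvex_comp {c : Fin n → ℕ} (hbal : IsBalanced c) :
    ∃ σ : Equiv.Perm (Fin n), c = minconvex n (∑ i, c i) ∘ σ := by
  set τ := Tuple.sort (OrderDual.toDual ∘ c)
  have hsorted : Nonincreasing (c ∘ τ) := fun i j hij =>
    Tuple.monotone_sort (OrderDual.toDual ∘ c) hij
  have h := eq_minconvex_of_isBalanced_of_nonincreasing (fun i j => hbal (τ i) (τ j)) hsorted
  rw [Equiv.sum_comp τ c] at h
  exact ⟨τ.symm, funext fun i => by simpa using congrFun h (τ.symm i)⟩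

lemma Nat.choose_succ_le_choose_of_le_two_mul {t x : ℕ} (h : t ≤ 2 * x) :
    t.choose (x + 1) ≤ t.choose x := by
  have key := Nat.choose_succ_right_eq t x
  have : t - x ≤ x := by omega
  nlinarith [Nat.zero_le (t.choose x)]

lemma Nat.choose_succ_lt_choose_of_le_two_mul {t x : ℕ} (h : t ≤ 2 * x) (hx : x + 1 ≤ t) :
    t.choose (x + 1) < t.choose x := by
  have key := Nat.choose_succ_right_eq t x
  have : t - x ≤ x := by omega
  nlinarith [Nat.choose_pos hx]

lemma Finset.sum_add_eq_sum_add_of_eq_off_pair {ι M : Type*} [Fintype ι] [DecidableEq ι]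
    [AddCommMonoid M] {f g : ι → M} {i j : ι} (hij : i ≠ j)
    (h : ∀ c, c ≠ i → c ≠ j → f c = g c) :
    ∑ c, f c + (g i + g j) = ∑ c, g c + (f i + f j) := by
  have hrest : ∑ c ∈ {i, j}ᶜ, f c = ∑ c ∈ {i, j}ᶜ, g c :=
    sum_congr rfl fun c hc => by simp only [mem_compl, mem_insert, mem_singleton] at hc; grind
  rw [← sum_compl_add_sum {i, j} f, ← sum_compl_add_sum {i, j} g, sum_pair hij, sum_pair hij,
    hrest, add_right_comm]

section SwapInRows

variable (i j : Fin n)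

def swapInRows (S : Finset (Fin n)) (M : Fin n → Fin n → Bool) : Fin n → Fin n → Bool :=
  fun r c => if r ∈ S then M r (Equiv.swap i j c) else M r c

def unsortedRows (M : Fin n → Fin n → Bool) : Finset (Fin n) :=
  {r | M r i = true ∧ M r j = false}

def splitRows (M : Fin n → Fin n → Bool) : Finset (Fin n) :=
  {r | M r i = false ∧ M r j = true}

def sortCols (M : Fin n → Fin n → Bool) : Fin n → Fin n → Bool :=
  swapInRows i j (unsortedRows i j M) M

variable {i j} {S : Finset (Fin n)} {M R : Fin n → Fin n → Bool}

@[simp]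
lemma swapInRows_swapInRows : swapInRows i j S (swapInRows i j S M) = M := by
  funext r c
  by_cases hr : r ∈ S <;> simp [swapInRows, hr]

lemma swapInRows_sortCols : swapInRows i j (unsortedRows i j M) (sortCols i j M) = M :=
  swapInRows_swapInRows

lemma rowSum_swapInRows (r : Fin n) : rowSum (swapInRows i j S M) r = rowSum M r := by
  by_cases hr : r ∈ S
  · simp only [rowSum, swapInRows, hr, if_true]
    exact Equiv.sum_comp (Equiv.swap i j) fun c => if M r c then 1 else 0
  · simp [rowSum, swapInRows, hr]

lemma colSum_swapInRows_of_ne {c : Fin n} (hi : c ≠ i) (hj : c ≠ j) :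
    colSum (swapInRows i j S M) c = colSum M c := by
  simp [colSum, swapInRows, Equiv.swap_apply_of_ne_of_ne hi hj]

lemma colSum_swapInRows_add :
    colSum (swapInRows i j S M) i + colSum (swapInRows i j S M) j = colSum M i + colSum M j := by
  simp only [colSum, ← sum_add_distrib]
  refine sum_congr rfl fun r _ => ?_
  by_cases hr : r ∈ S <;> simp [swapInRows, hr, add_comm]

lemma colSum_swapInRows_left (hS : S ⊆ splitRows i j M) :
    colSum (swapInRows i j S M) i = colSum M i + #S := by
  have hcard : #S = ∑ r, if r ∈ S then 1 else 0 := by simp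
  rw [hcard, colSum, colSum, ← sum_add_distrib]
  refine sum_congr rfl fun r _ => ?_
  by_cases hr : r ∈ S
  · have := @hS r
    simp_all [swapInRows, splitRows]
  · simp [swapInRows, hr]

lemma colSum_left_add_card_splitRows (hR : ∀ r, R r i = true → R r j = true) :
    colSum R i + #(splitRows i j R) = colSum R j := by
  rw [splitRows, card_filter, colSum, colSum, ← sum_add_distrib]
  refine sum_congr rfl fun r _ => ?_
  have := hR r
  revert this
  cases R r i <;> cases R r j <;> simp

lemma unsortedRows_swapInRows (hR : ∀ r, R r i = true → R r j = true)
    (hS : S ⊆ splitRows i j R) : unsortedRows i j (swapInRows i j S R) = S := by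
  ext r
  have hsplit := @hS r
  have := hR r
  by_cases hr : r ∈ S <;>
    simp_all [unsortedRows, splitRows, swapInRows]

lemma sortCols_left_imp_right (r : Fin n) :
    sortCols i j M r i = true → sortCols i j M r j = true := by
  cases hi : M r i <;> cases hj : M r j <;> simp [sortCols, swapInRows, unsortedRows, hi, hj]

lemma unsortedRows_subset_splitRows_sortCols :
    unsortedRows i j M ⊆ splitRows i j (sortCols i j M) := fun r hr => by
  simp_all [unsortedRows, splitRows, sortCols, swapInRows]

end SwapInRows

def sortedFrames (b A : Fin n → ℕ) (i j : Fin n) : Finset (Fin n → Fin n → Bool) :=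
  {R | (∀ r, rowSum R r = b r) ∧ (∀ c, c ≠ i → c ≠ j → colSum R c = A c) ∧
    colSum R i + colSum R j = A i + A j ∧ ∀ r, R r i = true → R r j = true}

section SortedFrames

variable {b A : Fin n → ℕ} {i j : Fin n} {R : Fin n → Fin n → Bool}

lemma sortedFrames_congr {A' : Fin n → ℕ} (hoff : ∀ c, c ≠ i → c ≠ j → A' c = A c)
    (hpair : A' i + A' j = A i + A j) : sortedFrames b A' i j = sortedFrames b A i j := by
  refine filter_congr fun R _ => ?_
  have hcols : (∀ c, c ≠ i → c ≠ j → colSum R c = A' c) ↔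
      (∀ c, c ≠ i → c ≠ j → colSum R c = A c) :=
    forall_congr' fun c => imp_congr_right fun hi => imp_congr_right fun hj => by rw [hoff c hi hj]
  rw [hpair, hcols]

lemma sortCols_mem_sortedFrames {M : Fin n → Fin n → Bool} (hM : M ∈ realizations A b) :
    sortCols i j M ∈ sortedFrames b A i j := by
  obtain ⟨hrow, hcol⟩ := (mem_filter.mp hM).2
  refine mem_filter.mpr
    ⟨mem_univ _, fun r => ?_, fun c hi hj => ?_, ?_, sortCols_left_imp_right⟩
  · rw [sortCols, rowSum_swapInRows, hrow]
  · rw [sortCols, colSum_swapInRows_of_ne hi hj, hcol]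
  · rw [sortCols, colSum_swapInRows_add, hcol, hcol]

lemma colSum_le_of_mem_sortedFrames (hR : R ∈ sortedFrames b A i j) (hA : A j ≤ A i) :
    colSum R i ≤ A i := by
  obtain ⟨-, -, hpair, hsorted⟩ := (mem_filter.mp hR).2
  have := colSum_left_add_card_splitRows hsorted
  omega

lemma card_filter_sortCols_eq_choose (hR : R ∈ sortedFrames b A i j) (hA : colSum R i ≤ A i) :
    #{M ∈ realizations A b | sortCols i j M = R} =
      (#(splitRows i j R)).choose (A i - colSum R i) := by
  obtain ⟨hrow, hoff, hpair, hsorted⟩ := (mem_filter.mp hR).2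
  rw [← card_powersetCard]
  refine card_nbij' (unsortedRows i j) (fun S => swapInRows i j S R) ?_ ?_ ?_ ?_
  · rintro M hM
    obtain ⟨hMA, rfl⟩ := mem_filter.mp hM
    have hcol := colSum_swapInRows_left
      (unsortedRows_subset_splitRows_sortCols (i := i) (j := j) (M := M))
    rw [swapInRows_sortCols, (mem_filter.mp hMA).2.2 i] at hcol
    exact mem_powersetCard.mpr ⟨unsortedRows_subset_splitRows_sortCols, by omega⟩
  · intro S hS
    obtain ⟨hSsub, hScard⟩ := mem_powersetCard.mp hS
    have hcoli := colSum_swapInRows_left hSsub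
    have hcolij := colSum_swapInRows_add (i := i) (j := j) (S := S) (M := R)
    refine mem_filter.mpr ⟨mem_filter.mpr ⟨mem_univ _, fun r => ?_, fun c => ?_⟩, ?_⟩
    · rw [rowSum_swapInRows, hrow]
    · beta_reduce
      by_cases hci : c = i
      · subst hci; omega
      by_cases hcj : c = j
      · subst hcj; omega
      rw [colSum_swapInRows_of_ne hci hcj, hoff c hci hcj]
    · rw [sortCols, unsortedRows_swapInRows hsorted hSsub, swapInRows_swapInRows]
  · rintro M hM
    obtain ⟨-, rfl⟩ := mem_filter.mp hM
    exact swapInRows_sortCols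
  · intro S hS
    exact unsortedRows_swapInRows hsorted (mem_powersetCard.mp hS).1

lemma N1_eq_sum_choose (hA : A j ≤ A i) :
    N1 A b = ∑ R ∈ sortedFrames b A i j, (#(splitRows i j R)).choose (A i - colSum R i) := by
  rw [N1_eq_card_realizations,
    card_eq_sum_card_fiberwise fun M hM => sortCols_mem_sortedFrames (i := i) (j := j) hM]
  exact sum_congr rfl fun R hR =>
    card_filter_sortCols_eq_choose hR (colSum_le_of_mem_sortedFrames hR hA)

end SortedFrames

lemma N1_lt_N1_update_update {a b : Fin n → ℕ} {i j : Fin n} (hij : i ≠ j)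
    (hgap : a j + 2 ≤ a i) (hpos : 0 < N1 a b) :
    N1 a b < N1 (Function.update (Function.update a i (a i - 1)) j (a j + 1)) b := by
  set a' := Function.update (Function.update a i (a i - 1)) j (a j + 1)
  have ha'i : a' i = a i - 1 := by simp [a', hij]
  have ha'j : a' j = a j + 1 := by simp [a']
  have hoff : ∀ c, c ≠ i → c ≠ j → a' c = a c := fun c hi hj => by simp [a', hi, hj]
  rw [N1_eq_sum_choose (i := i) (j := j) (by omega),
    N1_eq_sum_choose (i := i) (j := j) (by omega), sortedFrames_congr hoff (by omega)]
  have hstep : ∀ R ∈ sortedFrames b a i j, a i - colSum R i = (a' i - colSum R i) + 1 ∧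
      #(splitRows i j R) ≤ 2 * (a' i - colSum R i) := fun R hR => by
    obtain ⟨-, -, hpair, hsorted⟩ := (mem_filter.mp hR).2
    have := colSum_left_add_card_splitRows hsorted
    omega
  refine sum_lt_sum (fun R hR => ?_) ?_
  · rw [(hstep R hR).1]
    exact Nat.choose_succ_le_choose_of_le_two_mul (hstep R hR).2
  obtain ⟨M, hM⟩ := card_pos.mp (N1_eq_card_realizations a b ▸ hpos)
  have hR := sortCols_mem_sortedFrames (i := i) (j := j) hM
  refine ⟨_, hR, ?_⟩
  have hfiber :
      0 < (#(splitRows i j (sortCols i j M))).choose (a i - colSum (sortCols i j M) i) := by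
    rw [← card_filter_sortCols_eq_choose hR (colSum_le_of_mem_sortedFrames hR (by omega))]
    exact card_pos.mpr ⟨M, mem_filter.mpr ⟨hM, rfl⟩⟩
  rw [(hstep _ hR).1] at hfiber ⊢
  exact Nat.choose_succ_lt_choose_of_le_two_mul (hstep _ hR).2
    (Nat.choose_ne_zero_iff.mp hfiber.ne')

lemma exists_isBalanced_N1_le (b : Fin n → ℕ) {c : Fin n → ℕ} (hpos : 0 < N1 c b) :
    ∃ e, IsBalanced e ∧ ∑ i, e i = ∑ i, c i ∧ N1 c b ≤ N1 e b ∧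
      (¬ IsBalanced c → N1 c b < N1 e b) := by
  induction hN : ∑ i, c i ^ 2 using Nat.strong_induction_on generalizing c with
  | _ N ih =>
  by_cases hc : IsBalanced c
  · exact ⟨c, hc, rfl, le_rfl, absurd hc⟩
  simp only [IsBalanced, not_forall, not_le] at hc
  obtain ⟨i, j, hgap⟩ := hc
  have hij : i ≠ j := by rintro rfl; omega
  set c' := Function.update (Function.update c i (c i - 1)) j (c j + 1)
  have hlt := N1_lt_N1_update_update hij hgap hpos
  have hoff : ∀ k, k ≠ i → k ≠ j → c' k = c k := fun k hi hj => by simp [c', hi, hj]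
  have hc'i : c' i = c i - 1 := by simp [c', hij]
  have hc'j : c' j = c j + 1 := by simp [c']
  have hsum : ∑ k, c' k = ∑ k, c k := by
    have := sum_add_eq_sum_add_of_eq_off_pair hij hoff
    omega
  have hsq : ∑ k, c' k ^ 2 < N := by
    have := sum_add_eq_sum_add_of_eq_off_pair hij fun k hi hj => congrArg (· ^ 2) (hoff k hi hj)
    simp only [hc'i, hc'j] at this
    obtain ⟨u, hu⟩ : ∃ u, c i = u + 1 := ⟨c i - 1, by omega⟩
    rw [hu, Nat.add_sub_cancel] at this
    nlinarith
  obtain ⟨e, he, hes, hle, -⟩ := ih _ hsq (hpos.trans hlt) rfl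
  exact ⟨e, he, hes.trans hsum, (hlt.trans_le hle).le, fun _ => hlt.trans_le hle⟩

lemma N1_minconvex_eq_of_isBalanced {e : Fin n → ℕ} (he : IsBalanced e) (b : Fin n → ℕ) :
    N1 (minconvex n (∑ i, e i)) b = N1 e b := by
  obtain ⟨σ, hσ⟩ := he.exists_perm_eq_minconvex_comp
  conv_rhs => rw [hσ]
  rw [N1_comp_perm_left]

lemma N1_le_N1_minconvex {a b : Fin n → ℕ} (hpos : 0 < N1 a b) :
    N1 a b ≤ N1 (minconvex n (∑ i, a i)) b := by
  obtain ⟨e, he, hes, hle, -⟩ := exists_isBalanced_N1_le b hpos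
  rwa [← hes, N1_minconvex_eq_of_isBalanced he]

lemma N1_lt_N1_minconvex {a b : Fin n → ℕ} (hpos : 0 < N1 a b) (ha : ¬ IsBalanced a) :
    N1 a b < N1 (minconvex n (∑ i, a i)) b := by
  obtain ⟨e, he, hes, -, hlt⟩ := exists_isBalanced_N1_le b hpos
  rw [← hes, N1_minconvex_eq_of_isBalanced he]
  exact hlt ha

theorem stmt13_general {n : ℕ} (m : ℕ) (a b : Fin n → ℕ)
    (hd : LoopDigraphic a b) (hmono : Nonincreasing a) (hsum : ∑ i, a i = m)
    (hnot : ¬ (a = minconvex n m ∧ ∃ σ : Equiv.Perm (Fin n), b = minconvex n m ∘ σ))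
    (σ : Equiv.Perm (Fin n)) :
    N1 a b < N1 (minconvex n m) (minconvex n m ∘ σ) := by
  subst hsum
  have hba : ∑ i, b i = ∑ i, a i := sum_eq_sum_of_N1_pos hd
  set α := minconvex n (∑ i, a i)
  have hpos : 0 < N1 b α := by
    rw [N1_comm]
    exact hd.trans_le (N1_le_N1_minconvex hd)
  have hlast : N1 (minconvex n (∑ i, b i)) α = N1 α (α ∘ σ) := by
    rw [N1_comp_perm_right, hba]
  by_cases ha : IsBalanced a
  · have hb : ¬ IsBalanced b := fun hb => by
      have hbα := hb.exists_perm_eq_minconvex_comp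
      rw [hba] at hbα
      exact hnot ⟨eq_minconvex_of_isBalanced_of_nonincreasing ha hmono, hbα⟩
    calc N1 a b ≤ N1 α b := N1_le_N1_minconvex hd
      _ = N1 b α := N1_comm _ _
      _ < N1 (minconvex n (∑ i, b i)) α := N1_lt_N1_minconvex hpos hb
      _ = N1 α (α ∘ σ) := hlast
  · calc N1 a b < N1 α b := N1_lt_N1_minconvex hd ha
      _ = N1 b α := N1_comm _ _
      _ ≤ N1 (minconvex n (∑ i, b i)) α := N1_le_N1_minconvex hpos
      _ = N1 α (α ∘ σ) := hlast

theorem stmt13 {n : ℕ} (m : ℕ) (hm : m ≤ n * n) (a b : Fin n → ℕ)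
    (hd : LoopDigraphic a b) (hmono : Nonincreasing a) (hsum : ∑ i, a i = m)
    (hnot : ¬ (a = minconvex n m ∧ ∃ σ : Equiv.Perm (Fin n), b = minconvex n m ∘ σ))
    (σ : Equiv.Perm (Fin n)) :
    N1 a b < N1 (minconvex n m) (minconvex n m ∘ σ) :=
  stmt13_general m a b hd hmono hsum hnot σ
end

section
/- Let (a,b) be a lexicographically nonincreasing list of pairs (meaning (a_i,b_i) ≥_lex (a_j,b_j) whenever i ≤ j) and let (a',b) be a list such that a' yields a by a unit (i,j)-transfer. If (a',b) is digraphic, then N_2(a,b) > N_2(a',b) strictly. -/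
open Finset

/-!
Group the realizations by their frame: everything except the entries in columns `i`, `j` of the
rows `r ∉ {i, j}`. Given the frame and the row sums, each such row has a fixed number of `1`s in
these two columns, and only the `f` free rows (exactly one `1` there) can still choose. The column
sums of `i` and `j` are met exactly when a prescribed number `κ` of free rows put their `1` in
column `i`, so a fiber holds `C(f, κ)` realizations of `(a', b)` and `C(f, κ - 1)` of `(a, b)`;
since `a'ᵢ ≥ a'ⱼ + 2` forces `2κ ≥ f + 1`, the first count is at most the second.

The fiber of a realization `M` of `(a', b)` is strict unless `a'ᵢ = a'ⱼ + 2`, `Mⱼᵢ = 1` and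
`Mᵢⱼ = 0`. Then `aᵢ = aⱼ`, so `bᵢ ≥ bⱼ` by the lexicographic order, row `i` has a `1` in some
column `q` where row `j` has a `0`, and exchanging along `i, j, q` gives a realization of `(a, b)`
with `Nᵢⱼ = 1`, whose fiber is strict.
-/

section Realizations

variable {n : ℕ}

def IsRealization (c b : Fin n → ℕ) (M : Fin n → Fin n → Bool) : Prop :=
  (∀ r, M r r = false) ∧ (∀ r, rowSum M r = b r) ∧ (∀ q, colSum M q = c q)

instance (c b : Fin n → ℕ) : DecidablePred (IsRealization c b) := fun M => by
  unfold IsRealization; infer_instance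

lemma N2_eq_card (c b : Fin n → ℕ) : N2 c b = #{M | IsRealization c b M} := by
  rw [N2, Nat.card_eq_fintype_card, Fintype.card_subtype]
  rfl

lemma Digraphic.exists_isRealization {c b : Fin n → ℕ} (h : Digraphic c b) :
    ∃ M, IsRealization c b M := by
  rw [Digraphic, N2_eq_card, card_pos] at h
  simpa [Finset.Nonempty] using h

variable {i j : Fin n}

lemma mem_compl_pair {r : Fin n} : r ∈ ({i, j}ᶜ : Finset (Fin n)) ↔ r ≠ i ∧ r ≠ j := by
  simp

lemma sum_eq_add_add_sum_compl (hij : i ≠ j) (g : Fin n → ℕ) :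
    ∑ r, g r = g i + g j + ∑ r ∈ {i, j}ᶜ, g r := by
  rw [← sum_add_sum_compl {i, j}, sum_pair hij]

lemma rowSum_eq (hij : i ≠ j) (M : Fin n → Fin n → Bool) (r : Fin n) :
    rowSum M r = (if M r i then 1 else 0) + (if M r j then 1 else 0)
      + ∑ q ∈ {i, j}ᶜ, if M r q then 1 else 0 :=
  sum_eq_add_add_sum_compl hij _

lemma colSum_eq (hij : i ≠ j) (M : Fin n → Fin n → Bool) (q : Fin n) :
    colSum M q = (if M i q then 1 else 0) + (if M j q then 1 else 0)
      + ∑ r ∈ {i, j}ᶜ, if M r q then 1 else 0 :=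
  sum_eq_add_add_sum_compl hij _

end Realizations

namespace UnitTransfer

variable {n : ℕ} {a a' : Fin n → ℕ} {i j : Fin n}

lemma ne (h : UnitTransfer a' a i j) : i ≠ j := h.1.ne

lemma apply_left (h : UnitTransfer a' a i j) : a i + 1 = a' i := by
  rw [h.2.2, Function.update_of_ne h.ne, Function.update_self]
  have := h.2.1
  omega

lemma apply_right (h : UnitTransfer a' a i j) : a j = a' j + 1 := by
  rw [h.2.2, Function.update_self]

lemma apply_of_ne (h : UnitTransfer a' a i j) {r : Fin n} (hi : r ≠ i) (hj : r ≠ j) :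
    a r = a' r := by
  rw [h.2.2, Function.update_of_ne hj, Function.update_of_ne hi]

end UnitTransfer

section Frame

variable {n : ℕ} {i j : Fin n} {M M₁ : Fin n → Fin n → Bool} {S : Finset (Fin n)}

def frame (i j : Fin n) (M : Fin n → Fin n → Bool) : Fin n → Fin n → Bool :=
  fun r q => if (r ≠ i ∧ r ≠ j) ∧ (q = i ∨ q = j) then false else M r q

lemma apply_eq_of_frame_eq (h : frame i j M = frame i j M₁) {r q : Fin n}
    (hrq : r = i ∨ r = j ∨ q ≠ i ∧ q ≠ j) : M r q = M₁ r q := by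
  have := congrFun (congrFun h r) q
  simp only [frame] at this
  rwa [if_neg (by tauto), if_neg (by tauto)] at this

lemma pair_eq_of_frame_eq (hij : i ≠ j) (h : frame i j M = frame i j M₁) {r : Fin n}
    (hrow : rowSum M r = rowSum M₁ r) :
    (if M r i then 1 else 0) + (if M r j then 1 else 0)
      = (if M₁ r i then 1 else 0) + (if M₁ r j then 1 else 0) := by
  have houter : ∑ q ∈ {i, j}ᶜ, (if M r q then 1 else 0)
      = ∑ q ∈ {i, j}ᶜ, (if M₁ r q then 1 else 0) := by
    refine sum_congr rfl fun q hq => ?_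
    rw [mem_compl_pair] at hq
    rw [apply_eq_of_frame_eq h (Or.inr (Or.inr hq))]
  rw [rowSum_eq hij, rowSum_eq hij, houter] at hrow
  omega

def freeRows (i j : Fin n) (M : Fin n → Fin n → Bool) : Finset (Fin n) :=
  {r ∈ {i, j}ᶜ | M r i ≠ M r j}

lemma mem_freeRows {r : Fin n} :
    r ∈ freeRows i j M ↔ (r ≠ i ∧ r ≠ j) ∧ M r i ≠ M r j := by
  simp [freeRows]

lemma card_filter_freeRows_add_card_filter_freeRows :
    #{r ∈ freeRows i j M | M r i} + #{r ∈ freeRows i j M | M r j} = #(freeRows i j M) := by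
  rw [← card_filter_add_card_filter_not (s := freeRows i j M) (fun r => M r i = true)]
  congr 2
  refine filter_congr fun r hr => ?_
  have := (mem_freeRows.1 hr).2
  revert this
  cases M r i <;> cases M r j <;> simp

lemma colSum_balance (hij : i ≠ j) (hi : M i i = false) (hj : M j j = false) :
    colSum M i + (if M i j then 1 else 0) + #{r ∈ freeRows i j M | M r j}
      = colSum M j + (if M j i then 1 else 0) + #{r ∈ freeRows i j M | M r i} := by
  have hrow : ∀ r, (if M r i then 1 else 0) + (if M r i ≠ M r j ∧ M r j then 1 else 0)
      = (if M r j then 1 else 0) + (if M r i ≠ M r j ∧ M r i then 1 else 0) := by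
    intro r
    cases M r i <;> cases M r j <;> simp
  have hsum := sum_congr (s₁ := ({i, j}ᶜ : Finset (Fin n))) rfl fun r _ => hrow r
  rw [sum_add_distrib, sum_add_distrib] at hsum
  simp only [freeRows, filter_filter, card_filter]
  rw [colSum_eq hij, colSum_eq hij, hi, hj]
  omega

def fill (i j : Fin n) (M : Fin n → Fin n → Bool) (S : Finset (Fin n)) :
    Fin n → Fin n → Bool :=
  fun r q =>
    if r ∈ freeRows i j M ∧ q = i then decide (r ∈ S)
    else if r ∈ freeRows i j M ∧ q = j then decide (r ∉ S)
    else M r q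

lemma fill_of_notMem {r : Fin n} (hr : r ∉ freeRows i j M) : fill i j M S r = M r := by
  funext q
  simp [fill, hr]

lemma fill_of_ne {r q : Fin n} (hi : q ≠ i) (hj : q ≠ j) : fill i j M S r q = M r q := by
  simp [fill, hi, hj]

lemma fill_apply_self (r : Fin n) : fill i j M S r r = M r r := by
  by_cases hr : r ∈ freeRows i j M
  · exact fill_of_ne (mem_freeRows.1 hr).1.1 (mem_freeRows.1 hr).1.2
  · rw [fill_of_notMem hr]

lemma fill_left {r : Fin n} (hr : r ∈ freeRows i j M) : fill i j M S r i = decide (r ∈ S) := by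
  simp [fill, hr]

lemma fill_right (hij : i ≠ j) {r : Fin n} (hr : r ∈ freeRows i j M) :
    fill i j M S r j = decide (r ∉ S) := by
  simp [fill, hr, hij.symm]

lemma frame_fill : frame i j (fill i j M S) = frame i j M := by
  funext r q
  by_cases hr : r ∈ freeRows i j M
  · have := (mem_freeRows.1 hr).1
    by_cases hq : q = i ∨ q = j
    · simp [frame, this, hq]
    · simp only [not_or] at hq
      simp [frame, fill_of_ne hq.1 hq.2]
  · simp [frame, fill_of_notMem hr]

lemma rowSum_fill (hij : i ≠ j) (r : Fin n) : rowSum (fill i j M S) r = rowSum M r := by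
  by_cases hr : r ∈ freeRows i j M
  · have houter : ∑ q ∈ {i, j}ᶜ, (if fill i j M S r q then 1 else 0)
        = ∑ q ∈ {i, j}ᶜ, (if M r q then 1 else 0) := by
      refine sum_congr rfl fun q hq => ?_
      rw [mem_compl_pair] at hq
      rw [fill_of_ne hq.1 hq.2]
    rw [rowSum_eq hij, rowSum_eq hij, houter, fill_left hr, fill_right hij hr]
    have := (mem_freeRows.1 hr).2
    revert this
    by_cases hrS : r ∈ S <;> cases M r i <;> cases M r j <;> simp [hrS]
  · simp only [rowSum, fill_of_notMem hr]

lemma colSum_fill_of_ne {q : Fin n} (hi : q ≠ i) (hj : q ≠ j) :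
    colSum (fill i j M S) q = colSum M q := by
  simp only [colSum, fill_of_ne hi hj]

lemma colSum_fill_add (q : Fin n) (T : Finset (Fin n))
    (hT : ∀ r ∈ freeRows i j M, fill i j M S r q = decide (r ∈ T)) :
    colSum (fill i j M S) q + #{r ∈ freeRows i j M | M r q}
      = colSum M q + #{r ∈ freeRows i j M | r ∈ T} := by
  have hfree : ∑ r ∈ freeRows i j M, (if fill i j M S r q then 1 else 0)
      = #{r ∈ freeRows i j M | r ∈ T} := by
    rw [card_filter]
    exact sum_congr rfl fun r hr => by simp [hT r hr]
  have hrest : ∑ r ∈ (freeRows i j M)ᶜ, (if fill i j M S r q then 1 else 0)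
      = ∑ r ∈ (freeRows i j M)ᶜ, (if M r q then 1 else 0) :=
    sum_congr rfl fun r hr => by rw [fill_of_notMem (mem_compl.1 hr)]
  unfold colSum
  rw [← sum_add_sum_compl (freeRows i j M), ← sum_add_sum_compl (freeRows i j M), hfree, hrest,
    card_filter (fun r => M r q = true)]
  omega

lemma colSum_fill_left (hS : S ⊆ freeRows i j M) :
    colSum (fill i j M S) i + #{r ∈ freeRows i j M | M r i} = colSum M i + #S := by
  rw [colSum_fill_add i S fun r hr => fill_left hr, filter_mem_eq_inter, inter_eq_right.2 hS]

lemma colSum_fill_right (hij : i ≠ j) :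
    colSum (fill i j M S) j + #{r ∈ freeRows i j M | M r j}
      = colSum M j + #(freeRows i j M \ S) := by
  rw [colSum_fill_add j (freeRows i j M \ S) fun r hr => by
    rw [fill_right hij hr]; simp [hr]]
  rw [filter_mem_eq_inter, inter_eq_right.2 sdiff_subset]

lemma filter_fill_left (hS : S ⊆ freeRows i j M) : {r ∈ freeRows i j M | fill i j M S r i} = S := by
  ext r
  constructor
  · intro hr
    rw [mem_filter] at hr
    rw [fill_left hr.1] at hr
    simpa using hr.2
  · intro hr
    rw [mem_filter, fill_left (hS hr)]
    exact ⟨hS hr, by simpa using hr⟩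

lemma injOn_fill : Set.InjOn (fill i j M) (freeRows i j M).powerset := by
  intro S hS T hT hST
  rw [← filter_fill_left (mem_powerset.1 hS), ← filter_fill_left (mem_powerset.1 hT), hST]

lemma Bool.eq_and_eq_of_ite_add_ite_eq {x y x₁ y₁ : Bool}
    (h : (if x then 1 else 0) + (if y then 1 else 0)
      = (if x₁ then (1 : ℕ) else 0) + (if y₁ then 1 else 0)) (he : x₁ = y₁) :
    x = x₁ ∧ y = y₁ := by
  cases x <;> cases y <;> cases x₁ <;> cases y₁ <;> simp_all

lemma Bool.eq_not_of_ite_add_ite_eq {x y x₁ y₁ : Bool}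
    (h : (if x then 1 else 0) + (if y then 1 else 0)
      = (if x₁ then (1 : ℕ) else 0) + (if y₁ then 1 else 0)) (hne : x₁ ≠ y₁) :
    y = !x := by
  cases x <;> cases y <;> cases x₁ <;> cases y₁ <;> simp_all

lemma eq_fill_of_frame_eq (hij : i ≠ j) (h : frame i j M = frame i j M₁)
    (hrow : ∀ r, rowSum M r = rowSum M₁ r) :
    M = fill i j M₁ {r ∈ freeRows i j M₁ | M r i} := by
  funext r q
  have hpair := pair_eq_of_frame_eq hij h (hrow r)
  by_cases hrF : r ∈ freeRows i j M₁
  · by_cases hqi : q = i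
    · simp [hqi, fill_left hrF, hrF]
    by_cases hqj : q = j
    · rw [hqj, fill_right hij hrF,
        Bool.eq_not_of_ite_add_ite_eq hpair (mem_freeRows.1 hrF).2]
      simp [hrF]
    · rw [fill_of_ne hqi hqj]
      exact apply_eq_of_frame_eq h (by tauto)
  · rw [fill_of_notMem hrF]
    by_cases hrq : r = i ∨ r = j ∨ q ≠ i ∧ q ≠ j
    · exact apply_eq_of_frame_eq h hrq
    · have hr : r ≠ i ∧ r ≠ j := by tauto
      have heq : M₁ r i = M₁ r j := by simpa [mem_freeRows, hr] using hrF
      have hq : q = i ∨ q = j := by tauto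
      have := Bool.eq_and_eq_of_ite_add_ite_eq hpair heq
      rcases hq with rfl | rfl
      · exact this.1
      · exact this.2

variable {b c c₁ : Fin n → ℕ}

/-- Within a fiber only the free rows vary; the column sum of `i` fixes how many of them put their
`1` in column `i`, and every choice of that many free rows occurs exactly once. -/
lemma card_fiber_eq_choose (hij : i ≠ j) (hM₁ : IsRealization c₁ b M₁)
    (hc : ∀ r, r ≠ i → r ≠ j → c r = c₁ r) (hcij : c i + c j = c₁ i + c₁ j) {m : ℕ}
    (hm : m + c₁ i = c i + #{r ∈ freeRows i j M₁ | M₁ r i}) :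
    #{M | IsRealization c b M ∧ frame i j M = frame i j M₁}
      = (#(freeRows i j M₁)).choose m := by
  have hsplit := card_filter_freeRows_add_card_filter_freeRows (i := i) (j := j) (M := M₁)
  rw [← card_powersetCard, ← card_image_of_injOn (injOn_fill.mono fun S hS =>
    mem_powerset.2 (mem_powersetCard.1 hS).1)]
  congr 1
  ext M
  simp only [mem_filter, mem_univ, true_and, mem_image, mem_powersetCard]
  constructor
  · rintro ⟨hM, hfr⟩
    have hfill := eq_fill_of_frame_eq hij hfr fun r => (hM.2.1 r).trans (hM₁.2.1 r).symm
    have hcol := colSum_fill_left (S := {r ∈ freeRows i j M₁ | M r i}) (filter_subset _ _)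
    rw [← hfill, hM.2.2, hM₁.2.2] at hcol
    exact ⟨_, ⟨filter_subset _ _, by omega⟩, hfill.symm⟩
  · rintro ⟨S, ⟨hSF, hSm⟩, rfl⟩
    refine ⟨⟨fun r => (fill_apply_self r).trans (hM₁.1 r),
      fun r => (rowSum_fill hij r).trans (hM₁.2.1 r), fun q => ?_⟩, frame_fill⟩
    by_cases hqi : q = i
    · have := colSum_fill_left hSF
      rw [hM₁.2.2] at this
      rw [hqi]
      omega
    by_cases hqj : q = j
    · have := colSum_fill_right (M := M₁) (S := S) hij
      rw [hM₁.2.2, card_sdiff_of_subset hSF] at this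
      rw [hqj]
      have := card_le_card hSF
      omega
    · rw [colSum_fill_of_ne hqi hqj, hM₁.2.2, hc q hqi hqj]

end Frame

lemma Nat.choose_succ_le_choose {n k : ℕ} (h : n ≤ 2 * k + 1) :
    n.choose (k + 1) ≤ n.choose k := by
  refine Nat.le_of_mul_le_mul_right ?_ k.succ_pos
  rw [Nat.choose_succ_right_eq]
  exact Nat.mul_le_mul_left _ (by omega)

lemma Nat.choose_succ_lt_choose {n k : ℕ} (h : n ≤ 2 * k) (hk : k < n) :
    n.choose (k + 1) < n.choose k := by
  refine Nat.lt_of_mul_lt_mul_right (a := k + 1) ?_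
  rw [Nat.choose_succ_right_eq]
  exact (Nat.mul_lt_mul_left (Nat.choose_pos hk.le)).2 (by omega)

namespace UnitTransfer

variable {n : ℕ} {a a' b : Fin n → ℕ} {i j : Fin n} {M₁ : Fin n → Fin n → Bool}

lemma card_fiber (ht : UnitTransfer a' a i j) (hM₁ : IsRealization a' b M₁) :
    ∃ k, #{M | IsRealization a' b M ∧ frame i j M = frame i j M₁}
        = (#(freeRows i j M₁)).choose (k + 1)
      ∧ #{M | IsRealization a b M ∧ frame i j M = frame i j M₁}
        = (#(freeRows i j M₁)).choose k
      ∧ k < #(freeRows i j M₁)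
      ∧ 2 * k + 2 + a' j + (if M₁ j i then 1 else 0)
        = #(freeRows i j M₁) + a' i + (if M₁ i j then 1 else 0) := by
  have hbal := colSum_balance ht.ne (hM₁.1 i) (hM₁.1 j)
  rw [hM₁.2.2, hM₁.2.2] at hbal
  have hsplit := card_filter_freeRows_add_card_filter_freeRows (i := i) (j := j) (M := M₁)
  have htr := ht.2.1
  have hi := ht.apply_left
  have hj := ht.apply_right
  obtain ⟨k, hk⟩ : ∃ k, #{r ∈ freeRows i j M₁ | M₁ r i} = k + 1 :=
    ⟨#{r ∈ freeRows i j M₁ | M₁ r i} - 1, by split_ifs at hbal <;> omega⟩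
  refine ⟨k, ?_, ?_, by omega, by omega⟩
  · exact card_fiber_eq_choose ht.ne hM₁ (fun _ _ _ => rfl) rfl (by omega)
  · exact card_fiber_eq_choose ht.ne hM₁ (fun _ => ht.apply_of_ne) (by omega) (by omega)

lemma card_fiber_le (ht : UnitTransfer a' a i j) (φ : Fin n → Fin n → Bool) :
    #{M | IsRealization a' b M ∧ frame i j M = φ}
      ≤ #{M | IsRealization a b M ∧ frame i j M = φ} := by
  rcases eq_empty_or_nonempty {M | IsRealization a' b M ∧ frame i j M = φ} with h | ⟨M₁, hM₁⟩
  · simp [h]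
  obtain ⟨hreal, rfl⟩ := (mem_filter.1 hM₁).2
  obtain ⟨k, h', h, -, hk⟩ := ht.card_fiber hreal
  rw [h', h]
  have := ht.2.1
  exact Nat.choose_succ_le_choose (by split_ifs at hk <;> omega)

lemma card_fiber_lt (ht : UnitTransfer a' a i j) (hM₁ : IsRealization a' b M₁)
    (hstrict : M₁ i j = true ∨ M₁ j i = false ∨ a' j + 3 ≤ a' i) :
    #{M | IsRealization a' b M ∧ frame i j M = frame i j M₁}
      < #{M | IsRealization a b M ∧ frame i j M = frame i j M₁} := by
  obtain ⟨k, h', h, hkf, hk⟩ := ht.card_fiber hM₁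
  rw [h', h]
  have := ht.2.1
  refine Nat.choose_succ_lt_choose ?_ hkf
  cases h₁ : M₁ i j <;> cases h₂ : M₁ j i <;> simp [h₁, h₂] at hk hstrict <;> omega

lemma card_fiber_lt_of_apply_eq_true (ht : UnitTransfer a' a i j) {N : Fin n → Fin n → Bool}
    (hN : IsRealization a b N) (hNij : N i j = true) :
    #{M | IsRealization a' b M ∧ frame i j M = frame i j N}
      < #{M | IsRealization a b M ∧ frame i j M = frame i j N} := by
  rcases eq_empty_or_nonempty {M | IsRealization a' b M ∧ frame i j M = frame i j N}
    with h | ⟨M₁, hM₁⟩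
  · rw [h, card_empty, card_pos]
    exact ⟨N, by simp [hN]⟩
  obtain ⟨hM₁, hfr⟩ := (mem_filter.1 hM₁).2
  rw [← hfr]
  exact ht.card_fiber_lt hM₁ (Or.inl ((apply_eq_of_frame_eq hfr (Or.inl rfl)).trans hNij))

end UnitTransfer

section Switch

variable {n : ℕ} {b c : Fin n → ℕ} {i j : Fin n} {M : Fin n → Fin n → Bool}

lemma IsRealization.exists_col_true_false (hij : i ≠ j) (hM : IsRealization c b M)
    (hMij : M i j = false) (hMji : M j i = true) (hb : b j ≤ b i) :
    ∃ q, q ≠ i ∧ q ≠ j ∧ M i q = true ∧ M j q = false := by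
  have hi := rowSum_eq hij M i
  have hj := rowSum_eq hij M j
  rw [hM.2.1, hM.1, hMij] at hi
  rw [hM.2.1, hM.1, hMji] at hj
  simp only [Bool.false_eq_true, if_false, if_true] at hi hj
  obtain ⟨q, hq, hlt⟩ := exists_lt_of_sum_lt (s := {i, j}ᶜ)
    (f := fun q => if M j q then 1 else 0) (g := fun q => if M i q then 1 else 0) (by omega)
  rw [mem_compl_pair] at hq
  refine ⟨q, hq.1, hq.2, ?_⟩
  revert hlt
  cases M i q <;> cases M j q <;> simp

def switch (i j q : Fin n) (M : Fin n → Fin n → Bool) : Fin n → Fin n → Bool := fun r =>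
  if r = i then M i ∘ Equiv.swap j q else if r = j then M j ∘ Equiv.swap i q else M r

variable {q : Fin n}

lemma switch_apply_left : switch i j q M i = M i ∘ Equiv.swap j q := by
  simp [switch]

lemma switch_apply_right (hij : i ≠ j) : switch i j q M j = M j ∘ Equiv.swap i q := by
  simp [switch, hij.symm]

lemma switch_apply_of_ne {r : Fin n} (hi : r ≠ i) (hj : r ≠ j) : switch i j q M r = M r := by
  simp [switch, hi, hj]

lemma rowSum_switch (hij : i ≠ j) (r : Fin n) : rowSum (switch i j q M) r = rowSum M r := by
  by_cases hri : r = i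
  · simp only [rowSum, hri, switch_apply_left, Function.comp_apply]
    exact Equiv.sum_comp (Equiv.swap j q) fun p => if M i p then 1 else 0
  by_cases hrj : r = j
  · simp only [rowSum, hrj, switch_apply_right hij, Function.comp_apply]
    exact Equiv.sum_comp (Equiv.swap i q) fun p => if M j p then 1 else 0
  · simp only [rowSum, switch_apply_of_ne hri hrj]

lemma colSum_switch_add (hij : i ≠ j) (p : Fin n) :
    colSum (switch i j q M) p + (if M i p then 1 else 0) + (if M j p then 1 else 0)
      = colSum M p + (if M i (Equiv.swap j q p) then 1 else 0)
        + (if M j (Equiv.swap i q p) then 1 else 0) := by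
  have houter : ∑ r ∈ {i, j}ᶜ, (if switch i j q M r p then 1 else 0)
      = ∑ r ∈ {i, j}ᶜ, (if M r p then 1 else 0) := by
    refine sum_congr rfl fun r hr => ?_
    rw [mem_compl_pair] at hr
    rw [switch_apply_of_ne hr.1 hr.2]
  rw [colSum_eq hij, colSum_eq hij M, houter, switch_apply_left, switch_apply_right hij]
  simp only [Function.comp_apply]
  omega

lemma switch_apply_self (hij : i ≠ j) (hqi : q ≠ i) (hqj : q ≠ j) (r : Fin n) : switch i j q M r r = M r r := by
  by_cases hri : r = i
  · rw [hri, switch_apply_left, Function.comp_apply,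
      Equiv.swap_apply_of_ne_of_ne hij hqi.symm]
  by_cases hrj : r = j
  · rw [hrj, switch_apply_right hij, Function.comp_apply,
      Equiv.swap_apply_of_ne_of_ne hij.symm hqj.symm]
  · rw [switch_apply_of_ne hri hrj]

lemma IsRealization.exists_switch (hij : i ≠ j) (hM : IsRealization c b M)
    (hMij : M i j = false) (hMji : M j i = true) (hb : b j ≤ b i) :
    ∃ N, IsRealization (Function.update (Function.update c i (c i - 1)) j (c j + 1)) b N
      ∧ N i j = true := by
  obtain ⟨q, hqi, hqj, hMiq, hMjq⟩ := hM.exists_col_true_false hij hMij hMji hb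
  refine ⟨switch i j q M, ⟨fun r => (switch_apply_self hij hqi hqj r).trans (hM.1 r),
    fun r => (rowSum_switch hij r).trans (hM.2.1 r), fun p => ?_⟩, ?_⟩
  · have h := colSum_switch_add (M := M) (q := q) hij p
    rw [hM.2.2] at h
    by_cases hpi : p = i
    · subst hpi
      simp [Equiv.swap_apply_of_ne_of_ne hij hqi.symm, hM.1, hMji, hMjq, hij] at h ⊢
      omega
    by_cases hpj : p = j
    · subst hpj
      simp [Equiv.swap_apply_of_ne_of_ne hij.symm hqj.symm, hM.1, hMij, hMiq] at h ⊢
      omega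
    by_cases hpq : p = q
    · subst hpq
      simp [hMij, hMji, hMiq, hMjq, hpi, hpj] at h ⊢
      omega
    · simp [Equiv.swap_apply_of_ne_of_ne hpj hpq, Equiv.swap_apply_of_ne_of_ne hpi hpq,
        hpi, hpj] at h ⊢
      omega
  · simp [switch_apply_left, hMiq]

end Switch

theorem stmt15 {n : ℕ} (a a' b : Fin n → ℕ) (i j : Fin n)
    (hlex : LexNonincreasing a b) (ht : UnitTransfer a' a i j)
    (hd' : Digraphic a' b) :
    N2 a' b < N2 a b := by
  obtain ⟨M₀, hM₀⟩ := hd'.exists_isRealization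
  rw [N2_eq_card, N2_eq_card,
    card_eq_sum_card_fiberwise (f := frame i j) (t := univ) fun _ _ => mem_univ _,
    card_eq_sum_card_fiberwise (f := frame i j) (t := univ) fun _ _ => mem_univ _]
  simp only [filter_filter]
  refine sum_lt_sum (fun φ _ => ht.card_fiber_le φ) ?_
  by_cases hstrict : M₀ i j = true ∨ M₀ j i = false ∨ a' j + 3 ≤ a' i
  · exact ⟨_, mem_univ _, ht.card_fiber_lt hM₀ hstrict⟩
  simp only [not_or, Bool.not_eq_true, Bool.not_eq_false, not_le] at hstrict
  obtain ⟨hM₀ij, hM₀ji, htight⟩ := hstrict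
  have hb : b j ≤ b i := by
    have := ht.2.1
    have := ht.apply_left
    have := ht.apply_right
    rcases hlex i j ht.1.le with h | h
    · omega
    · exact h.2
  obtain ⟨N, hN, hNij⟩ := hM₀.exists_switch ht.ne hM₀ij hM₀ji hb
  rw [← ht.2.2] at hN
  exact ⟨_, mem_univ _, ht.card_fiber_lt_of_apply_eq_true hN hNij⟩
end

section
/- Let (a',b) be a digraphic list with b nondecreasing and let a be obtained from a' by a unit (i,j)-left-transfer: there exist i < j with a'_i ≤ a'_j − 1 (specifically a'_i = a'_j − 1), and a = a' + e_i − e_j. Then (a,b) is digraphic and N_2(a,b) ≥ N_2(a',b). -/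
open Finset

/-
Let `M` realize `(a', b)`. Walk through the rows `r ∉ {i, j}` in order, stepping up on a row that
reads `(0, 1)` in columns `(i, j)` and down on one that reads `(1, 0)`; since `a'_j = a'_i + 1`,
the walk ends at height `1 - M i j + M j i`.

If it ends strictly above its minimum, the step right after the last minimum is an up-step, and
moving that row's `1` from column `j` to column `i` gives a realization of `(a, b)`. In the new
walk that row ends the first minimum, which is negative, so the row can be read off the image.

Otherwise `M i j = 1`, `M j i = 0` and the walk never goes below `0`. The same walk along the
columns `c ∉ {i, j}`, read in rows `(i, j)`, now ends at `b_j - b_i + 1 > 0` because `b_i ≤ b_j`,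
so it has an up-step `c` right after its last minimum; reversing the arc `i → j` and swapping
`M i c = 0`, `M j c = 1` realizes `(a, b)`, leaves the row walk untouched, and `c` is again read
off from a first minimum. The sign of the row walk of the image tells the
two cases apart, so the map is injective.
-/

namespace DigraphTransfer

open Function
open Equiv (Perm swap swap_apply_of_ne_of_ne)

variable {n : ℕ}

def prefixSum (s : Fin n → ℤ) (k : ℕ) : ℤ := ∑ t : Fin n with t.val < k, s t

lemma prefixSum_zero (s : Fin n → ℤ) : prefixSum s 0 = 0 := by simp [prefixSum]

lemma prefixSum_self (s : Fin n → ℤ) : prefixSum s n = ∑ t, s t := by simp [prefixSum]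

lemma prefixSum_succ (s : Fin n → ℤ) {k : ℕ} (hk : k < n) :
    prefixSum s (k + 1) = prefixSum s k + s ⟨k, hk⟩ := by
  simp only [prefixSum, sum_filter]
  rw [← Fintype.sum_ite_eq' (⟨k, hk⟩ : Fin n) s, ← sum_add_distrib]
  refine sum_congr rfl fun t _ => ?_
  by_cases h : t = ⟨k, hk⟩
  · subst h; simp
  · have : (t : ℕ) ≠ k := fun e => h (Fin.ext e)
    simp only [if_neg h, add_zero, Nat.lt_succ_iff]
    exact if_congr (by omega) rfl rfl

lemma prefixSum_update (s : Fin n → ℤ) (r : Fin n) (x : ℤ) (k : ℕ) :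
    prefixSum (update s r x) k = prefixSum s k + if (r : ℕ) < k then x - s r else 0 := by
  simp only [prefixSum, sum_filter]
  rw [← Fintype.sum_ite_eq' r (fun _ => if (r : ℕ) < k then x - s r else 0), ← sum_add_distrib]
  refine sum_congr rfl fun t _ => ?_
  by_cases h : t = r
  · subst h
    by_cases hk : (t : ℕ) < k <;> simp [hk]
  · simp [h]

def lastArgmin (f : ℕ → ℤ) (n : ℕ) : ℕ := Nat.findGreatest (fun k => ∀ m ≤ n, f k ≤ f m) n

section lastArgmin

variable (f : ℕ → ℤ) (n : ℕ)

lemma lastArgmin_le : lastArgmin f n ≤ n := Nat.findGreatest_le n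

lemma lastArgmin_min : ∀ m ≤ n, f (lastArgmin f n) ≤ f m := by
  obtain ⟨k, hk, hmin⟩ := exists_min_image (range (n + 1)) f ⟨0, by simp⟩
  exact Nat.findGreatest_spec (P := fun k => ∀ m ≤ n, f k ≤ f m)
    (by simpa [Nat.lt_succ_iff] using hk) fun m hm => hmin m (by simpa [Nat.lt_succ_iff] using hm)

variable {f n}

lemma lt_of_lastArgmin_lt {k : ℕ} (hk : k ≤ n) (h : lastArgmin f n < k) :
    f (lastArgmin f n) < f k := by
  have hk' := Nat.findGreatest_is_greatest h hk
  push Not at hk'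
  obtain ⟨m, hm, hmk⟩ := hk'
  exact (lastArgmin_min f n m hm).trans_lt hmk

lemma lastArgmin_lt (h : f (lastArgmin f n) < f n) : lastArgmin f n < n :=
  (lastArgmin_le f n).lt_of_ne fun e => h.ne (congrArg f e)

end lastArgmin

def IsFirstArgmin (f : ℕ → ℤ) (n k : ℕ) : Prop :=
  k ≤ n ∧ (∀ m ≤ n, f k ≤ f m) ∧ ∀ m < k, f k < f m

lemma IsFirstArgmin.unique {f : ℕ → ℤ} {k k' : ℕ} (h : IsFirstArgmin f n k)
    (h' : IsFirstArgmin f n k') : k = k' := by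
  by_contra hne
  rcases Nat.lt_or_gt_of_ne hne with hlt | hlt
  · exact (h'.2.2 k hlt).not_ge (h.2.1 k' h'.1)
  · exact (h.2.2 k' hlt).not_ge (h'.2.1 k h.1)

lemma prefixSum_lastArgmin_nonpos (s : Fin n → ℤ) :
    prefixSum s (lastArgmin (prefixSum s) n) ≤ 0 :=
  (lastArgmin_min _ n 0 n.zero_le).trans_eq (prefixSum_zero s)

def EndsAboveMin (s : Fin n → ℤ) : Prop :=
  prefixSum s (lastArgmin (prefixSum s) n) < prefixSum s n

instance (s : Fin n → ℤ) : Decidable (EndsAboveMin s) := Int.decLt _ _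

def flipIndex (s : Fin n → ℤ) (h : EndsAboveMin s) : Fin n :=
  ⟨lastArgmin (prefixSum s) n, lastArgmin_lt h⟩

theorem flipIndex_spec (s : Fin n → ℤ) (hs : ∀ t, s t ≤ 1) (h : EndsAboveMin s) :
    s (flipIndex s h) = 1 ∧
      IsFirstArgmin (prefixSum (update s (flipIndex s h) (-1))) n (flipIndex s h + 1) ∧
      prefixSum (update s (flipIndex s h) (-1)) (flipIndex s h + 1) < 0 := by
  have hℓ := lastArgmin_lt h
  have hstep : prefixSum s (lastArgmin (prefixSum s) n + 1)
      = prefixSum s (lastArgmin (prefixSum s) n) + s (flipIndex s h) := prefixSum_succ s hℓ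
  have hmin := lastArgmin_min (prefixSum s) n
  have hafter := fun k => lt_of_lastArgmin_lt (f := prefixSum s) (n := n) (k := k)
  have hnonpos := prefixSum_lastArgmin_nonpos s
  have hnew := prefixSum_update s (flipIndex s h) (-1)
  have hr : (flipIndex s h : ℕ) = lastArgmin (prefixSum s) n := rfl
  generalize flipIndex s h = r at *
  generalize lastArgmin (prefixSum s) n = ℓ at *
  subst hr
  have hup : s r = 1 := le_antisymm (hs r) (by linarith [hafter _ hℓ (Nat.lt_succ_self r)])
  refine ⟨hup, ⟨hℓ, fun m hm => ?_, fun m hm => ?_⟩, ?_⟩ <;>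
    simp only [hnew, hup, hstep, lt_add_one, if_true]
  · have := hmin m hm
    have := hafter m hm
    split_ifs <;> omega
  · rw [if_neg (by omega)]
    have := hmin m (by omega)
    omega
  · omega

def pairSign (i j : Fin n) (M : Fin n → Fin n → Bool) (r : Fin n) : ℤ :=
  if r = i ∨ r = j then 0 else (M r j).toInt - (M r i).toInt

lemma pairSign_le_one (i j : Fin n) (M : Fin n → Fin n → Bool) (r : Fin n) :
    pairSign i j M r ≤ 1 := by
  unfold pairSign
  split_ifs
  · exact zero_le_one
  · cases M r i <;> cases M r j <;> simp

lemma pairSign_eq_one {i j r : Fin n} {M : Fin n → Fin n → Bool}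
    (h : pairSign i j M r = 1) : r ≠ i ∧ r ≠ j ∧ M r i = false ∧ M r j = true := by
  unfold pairSign at h
  split_ifs at h with hr
  · exact absurd h zero_ne_one
  rw [not_or] at hr
  refine ⟨hr.1, hr.2, ?_⟩
  cases hi : M r i <;> cases hj : M r j <;> simp_all

lemma cast_colSum (M : Fin n → Fin n → Bool) (q : Fin n) :
    (colSum M q : ℤ) = ∑ p, (M p q).toInt := by
  simp only [colSum, Nat.cast_sum]
  exact sum_congr rfl fun p _ => by cases M p q <;> rfl

lemma sum_pairSign {i j : Fin n} (hij : i ≠ j) {M : Fin n → Fin n → Bool}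
    (hi : M i i = false) (hj : M j j = false) :
    ∑ r, pairSign i j M r = colSum M j - colSum M i - (M i j).toInt + (M j i).toInt := by
  have hsplit : ∀ r, pairSign i j M r = ((M r j).toInt - (M r i).toInt)
      - if r ∈ ({i, j} : Finset (Fin n)) then (M r j).toInt - (M r i).toInt else 0 := by
    intro r
    simp only [pairSign, mem_insert, mem_singleton]
    split_ifs <;> ring
  simp only [hsplit, sum_sub_distrib, sum_ite_mem, univ_inter, sum_pair hij, cast_colSum, hi, hj,
    Bool.toInt_false]
  ring

lemma colSum_flip (M : Fin n → Fin n → Bool) : colSum (flip M) = rowSum M := rfl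

def permRow (M : Fin n → Fin n → Bool) (r : Fin n) (σ : Perm (Fin n)) :
    Fin n → Fin n → Bool :=
  update M r (M r ∘ σ)

section permRow

variable (M : Fin n → Fin n → Bool) (r : Fin n) (σ : Perm (Fin n))

lemma permRow_permRow_inv : permRow (permRow M r σ) r σ⁻¹ = M := by
  ext p q
  by_cases hp : p = r
  · subst hp; simp [permRow]
  · simp [permRow, hp]

lemma permRow_injective : Injective fun M => permRow M r σ :=
  LeftInverse.injective (g := fun M => permRow M r σ⁻¹) fun M => permRow_permRow_inv M r σ

lemma rowSum_permRow : rowSum (permRow M r σ) = rowSum M := by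
  ext p
  by_cases hp : p = r
  · subst hp
    simp only [rowSum, permRow, update_self, comp_apply]
    exact Equiv.sum_comp σ fun q => if M p q then 1 else 0
  · simp [rowSum, permRow, hp]

lemma permRow_diag {σ} (hσ : σ r = r) (p : Fin n) : permRow M r σ p p = M p p := by
  by_cases hp : p = r
  · subst hp; simp [permRow, hσ]
  · simp [permRow, hp]

lemma colSum_permRow (q : Fin n) :
    (colSum (permRow M r σ) q : ℤ) = colSum M q + (M r (σ q)).toInt - (M r q).toInt := by
  simp only [cast_colSum, permRow]
  rw [← add_sum_erase _ _ (mem_univ r), ← add_sum_erase _ _ (mem_univ r)]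
  rw [sum_congr rfl fun p hp => by rw [update_of_ne (ne_of_mem_erase hp)]]
  simp only [update_self, comp_apply]
  ring

end permRow

lemma pairSign_update_of_mem {i j r : Fin n} (hr : r = i ∨ r = j) (M : Fin n → Fin n → Bool)
    (v : Fin n → Bool) : pairSign i j (update M r v) = pairSign i j M := by
  ext r'
  by_cases h : r' = r
  · subst h; simp [pairSign, hr]
  · simp [pairSign, h]

def moveInRow (M : Fin n → Fin n → Bool) (i j r : Fin n) : Fin n → Fin n → Bool :=
  permRow M r (swap i j)

section moveInRow

variable {M : Fin n → Fin n → Bool} {i j r : Fin n}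

lemma moveInRow_injective : Injective fun M => moveInRow M i j r := permRow_injective r _

lemma moveInRow_diag (hri : r ≠ i) (hrj : r ≠ j) (p : Fin n) : moveInRow M i j r p p = M p p :=
  permRow_diag M r (swap_apply_of_ne_of_ne hri hrj) p

lemma rowSum_moveInRow : rowSum (moveInRow M i j r) = rowSum M := rowSum_permRow M r _

lemma colSum_moveInRow (hij : i ≠ j) (hMri : M r i = false) (hMrj : M r j = true) (q : Fin n) :
    (colSum (moveInRow M i j r) q : ℤ) =
      colSum M q + (Pi.single i 1 - Pi.single j 1 : Fin n → ℤ) q := by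
  rw [moveInRow, colSum_permRow]
  by_cases hqi : q = i
  · subst hqi; simp [hij, hMri, hMrj]
  by_cases hqj : q = j
  · subst hqj; simp [Ne.symm hij, hMri, hMrj, sub_eq_add_neg]
  simp [swap_apply_of_ne_of_ne hqi hqj, hqi, hqj]

lemma pairSign_moveInRow (hri : r ≠ i) (hrj : r ≠ j) (hMri : M r i = false)
    (hMrj : M r j = true) :
    pairSign i j (moveInRow M i j r) = update (pairSign i j M) r (-1) := by
  ext r'
  by_cases h : r' = r
  · subst h; simp [pairSign, moveInRow, permRow, hri, hrj, hMri, hMrj]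
  · simp [pairSign, moveInRow, permRow, h]

end moveInRow

def reverseArc (M : Fin n → Fin n → Bool) (i j c : Fin n) : Fin n → Fin n → Bool :=
  permRow (permRow M i (swap j c)) j (swap i c)

section reverseArc

variable {M : Fin n → Fin n → Bool} {i j c : Fin n}

lemma reverseArc_injective : Injective fun M => reverseArc M i j c :=
  (permRow_injective j _).comp (permRow_injective i _)

lemma reverseArc_diag (hij : i ≠ j) (hci : c ≠ i) (hcj : c ≠ j) (p : Fin n) :
    reverseArc M i j c p p = M p p := by
  rw [reverseArc, permRow_diag _ j (swap_apply_of_ne_of_ne hij.symm hcj.symm),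
    permRow_diag _ i (swap_apply_of_ne_of_ne hij hci.symm)]

lemma rowSum_reverseArc : rowSum (reverseArc M i j c) = rowSum M := by
  rw [reverseArc, rowSum_permRow, rowSum_permRow]

lemma colSum_reverseArc (hij : i ≠ j) (hci : c ≠ i) (hcj : c ≠ j) (hii : M i i = false)
    (hjj : M j j = false) (hMij : M i j = true) (hMji : M j i = false) (hMic : M i c = false)
    (hMjc : M j c = true) (q : Fin n) :
    (colSum (reverseArc M i j c) q : ℤ) =
      colSum M q + (Pi.single i 1 - Pi.single j 1 : Fin n → ℤ) q := by
  rw [reverseArc, colSum_permRow, colSum_permRow]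
  simp only [permRow, update_of_ne hij.symm]
  by_cases hqi : q = i
  · rw [hqi, swap_apply_of_ne_of_ne hij hci.symm]
    simp [hij, hii, hMji, hMjc]
  by_cases hqj : q = j
  · rw [hqj, swap_apply_of_ne_of_ne hij.symm hcj.symm]
    simp [hij.symm, hjj, hMij, hMic, sub_eq_add_neg]
  by_cases hqc : q = c
  · subst hqc; simp [hci, hcj, hMij, hMji, hMic, hMjc]
  simp [swap_apply_of_ne_of_ne hqi hqc, swap_apply_of_ne_of_ne hqj hqc, hqi, hqj]

lemma pairSign_reverseArc : pairSign i j (reverseArc M i j c) = pairSign i j M := by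
  rw [reverseArc, permRow, pairSign_update_of_mem (Or.inr rfl), permRow,
    pairSign_update_of_mem (Or.inl rfl)]

lemma pairSign_flip_reverseArc (hij : i ≠ j) (hci : c ≠ i) (hcj : c ≠ j) (hMij : M i j = true)
    (hMji : M j i = false) :
    pairSign i j (flip (reverseArc M i j c)) = update (pairSign i j (flip M)) c (-1) := by
  ext c'
  by_cases h : c' = c
  · subst h; simp [pairSign, reverseArc, permRow, flip, hij, hij.symm, hci, hcj, hMij, hMji]
  by_cases hc' : c' = i ∨ c' = j
  · simp [pairSign, h, hc']
  rw [not_or] at hc'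
  simp [pairSign, reverseArc, permRow, flip, hij, hij.symm, h, hc', swap_apply_of_ne_of_ne]

end reverseArc

def IsRealization (a b : Fin n → ℕ) (M : Fin n → Fin n → Bool) : Prop :=
  (∀ p, M p p = false) ∧ (∀ p, rowSum M p = b p) ∧ ∀ q, colSum M q = a q

lemma IsRealization.of_unitTransfer {a' b : Fin n → ℕ} {i j : Fin n} {M M' : Fin n → Fin n → Bool}
    (hM : IsRealization a' b M) (hij : i ≠ j) (hval : a' i + 1 = a' j)
    (hdiag : ∀ p, M' p p = M p p) (hrow : rowSum M' = rowSum M)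
    (hcol : ∀ q, (colSum M' q : ℤ) = colSum M q + (Pi.single i 1 - Pi.single j 1 : Fin n → ℤ) q) :
    IsRealization (update (update a' i (a' i + 1)) j (a' j - 1)) b M' := by
  refine ⟨fun p => (hdiag p).trans (hM.1 p), fun p => (congrFun hrow p).trans (hM.2.1 p),
    fun q => ?_⟩
  have := hcol q
  rw [hM.2.2 q, Pi.sub_apply] at this
  by_cases hqj : q = j
  · subst hqj
    rw [Pi.single_eq_of_ne hij.symm, Pi.single_eq_same] at this
    rw [update_self]
    omega
  by_cases hqi : q = i
  · subst hqi
    rw [Pi.single_eq_same, Pi.single_eq_of_ne hqj] at this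
    rw [update_of_ne hqj, update_self]
    omega
  rw [Pi.single_eq_of_ne hqi, Pi.single_eq_of_ne hqj] at this
  rw [update_of_ne hqj, update_of_ne hqi]
  omega

def shift (i j : Fin n) (M : Fin n → Fin n → Bool) : Fin n → Fin n → Bool :=
  if h : EndsAboveMin (pairSign i j M) then moveInRow M i j (flipIndex _ h)
  else if h' : EndsAboveMin (pairSign i j (flip M)) then reverseArc M i j (flipIndex _ h')
  else M

section shift

variable {a' b : Fin n → ℕ} {i j : Fin n} {M : Fin n → Fin n → Bool}

lemma exists_moveInRow (h : EndsAboveMin (pairSign i j M)) :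
    ∃ r, r ≠ i ∧ r ≠ j ∧ M r i = false ∧ M r j = true ∧ shift i j M = moveInRow M i j r ∧
      IsFirstArgmin (prefixSum (pairSign i j (shift i j M))) n (r + 1) ∧
      prefixSum (pairSign i j (shift i j M)) (r + 1) < 0 := by
  obtain ⟨hup, hfirst, hneg⟩ := flipIndex_spec _ (pairSign_le_one i j M) h
  obtain ⟨hri, hrj, hMri, hMrj⟩ := pairSign_eq_one hup
  have hshift : shift i j M = moveInRow M i j (flipIndex _ h) := dif_pos h
  refine ⟨_, hri, hrj, hMri, hMrj, hshift, ?_⟩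
  rw [hshift, pairSign_moveInRow hri hrj hMri hMrj]
  exact ⟨hfirst, hneg⟩

lemma arc_of_not_endsAboveMin (hM : IsRealization a' b M) (hij : i ≠ j)
    (hval : a' i + 1 = a' j) (h : ¬EndsAboveMin (pairSign i j M)) :
    M i j = true ∧ M j i = false ∧ ∀ k ≤ n, 0 ≤ prefixSum (pairSign i j M) k := by
  have htotal := sum_pairSign hij (hM.1 i) (hM.1 j)
  rw [← prefixSum_self, hM.2.2 i, hM.2.2 j, ← hval] at htotal
  have hmin := lastArgmin_min (prefixSum (pairSign i j M)) n
  have hnonpos := prefixSum_lastArgmin_nonpos (pairSign i j M)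
  rw [EndsAboveMin, not_lt] at h
  push_cast at htotal
  have harc : M i j = true ∧ M j i = false := by
    cases hMij : M i j <;> cases hMji : M j i <;>
      simp only [hMij, hMji, Bool.toInt_true, Bool.toInt_false] at htotal <;>
      first | exact ⟨rfl, rfl⟩ | omega
  rw [harc.1, harc.2, Bool.toInt_true, Bool.toInt_false] at htotal
  exact ⟨harc.1, harc.2, fun k hk => by linarith [hmin k hk]⟩

lemma endsAboveMin_flip (hM : IsRealization a' b M) (hij : i ≠ j) (hb : b i ≤ b j)
    (hMij : M i j = true) (hMji : M j i = false) : EndsAboveMin (pairSign i j (flip M)) := by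
  have htotal := sum_pairSign (M := flip M) hij (hM.1 i) (hM.1 j)
  rw [← prefixSum_self, colSum_flip, hM.2.1 i, hM.2.1 j] at htotal
  simp only [flip, hMij, hMji] at htotal
  have := prefixSum_lastArgmin_nonpos (pairSign i j (flip M))
  rw [EndsAboveMin, htotal]
  simp only [Bool.toInt_true, Bool.toInt_false]
  omega

lemma exists_reverseArc (hM : IsRealization a' b M) (hij : i ≠ j) (hval : a' i + 1 = a' j)
    (hb : b i ≤ b j) (h : ¬EndsAboveMin (pairSign i j M)) :
    ∃ c, c ≠ i ∧ c ≠ j ∧ M i c = false ∧ M j c = true ∧ M i j = true ∧ M j i = false ∧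
      shift i j M = reverseArc M i j c ∧
      IsFirstArgmin (prefixSum (pairSign i j (flip (shift i j M)))) n (c + 1) ∧
      ∀ k ≤ n, 0 ≤ prefixSum (pairSign i j (shift i j M)) k := by
  obtain ⟨hMij, hMji, hnonneg⟩ := arc_of_not_endsAboveMin hM hij hval h
  have h' := endsAboveMin_flip hM hij hb hMij hMji
  obtain ⟨hup, hfirst, -⟩ := flipIndex_spec _ (pairSign_le_one i j (flip M)) h'
  obtain ⟨hci, hcj, hMic, hMjc⟩ := pairSign_eq_one hup
  have hshift : shift i j M = reverseArc M i j (flipIndex _ h') := by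
    rw [shift, dif_neg h, dif_pos h']
  refine ⟨_, hci, hcj, hMic, hMjc, hMij, hMji, hshift, ?_, ?_⟩
  · rwa [hshift, pairSign_flip_reverseArc hij hci hcj hMij hMji]
  · rwa [hshift, pairSign_reverseArc]

lemma IsRealization.shift (hM : IsRealization a' b M) (hij : i ≠ j) (hval : a' i + 1 = a' j)
    (hb : b i ≤ b j) :
    IsRealization (update (update a' i (a' i + 1)) j (a' j - 1)) b (shift i j M) := by
  by_cases h : EndsAboveMin (pairSign i j M)
  · obtain ⟨r, hri, hrj, hMri, hMrj, hshift, -⟩ := exists_moveInRow h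
    rw [hshift]
    exact hM.of_unitTransfer hij hval (moveInRow_diag hri hrj) rowSum_moveInRow
      (colSum_moveInRow hij hMri hMrj)
  · obtain ⟨c, hci, hcj, hMic, hMjc, hMij, hMji, hshift, -⟩ := exists_reverseArc hM hij hval hb h
    rw [hshift]
    exact hM.of_unitTransfer hij hval (reverseArc_diag hij hci hcj) rowSum_reverseArc
      (colSum_reverseArc hij hci hcj (hM.1 i) (hM.1 j) hMij hMji hMic hMjc)

lemma shift_ne_shift {M₁ M₂ : Fin n → Fin n → Bool} (hM₂ : IsRealization a' b M₂) (hij : i ≠ j)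
    (hval : a' i + 1 = a' j) (hb : b i ≤ b j) (h₁ : EndsAboveMin (pairSign i j M₁))
    (h₂ : ¬EndsAboveMin (pairSign i j M₂)) : shift i j M₁ ≠ shift i j M₂ := by
  intro he
  obtain ⟨r, -, -, -, -, -, hfirst, hneg⟩ := exists_moveInRow h₁
  obtain ⟨-, -, -, -, -, -, -, -, -, hnonneg⟩ := exists_reverseArc hM₂ hij hval hb h₂
  rw [he] at hneg
  exact (hnonneg _ hfirst.1).not_gt hneg

lemma shift_injOn (hij : i ≠ j) (hval : a' i + 1 = a' j) (hb : b i ≤ b j) :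
    Set.InjOn (shift i j) {M | IsRealization a' b M} := by
  intro M₁ hM₁ M₂ hM₂ he
  by_cases h₁ : EndsAboveMin (pairSign i j M₁) <;> by_cases h₂ : EndsAboveMin (pairSign i j M₂)
  · obtain ⟨r₁, -, -, -, -, hs₁, hfirst₁, -⟩ := exists_moveInRow h₁
    obtain ⟨r₂, -, -, -, -, hs₂, hfirst₂, -⟩ := exists_moveInRow h₂
    rw [he] at hfirst₁
    obtain rfl : r₁ = r₂ := Fin.ext (Nat.succ_injective (hfirst₁.unique hfirst₂))
    exact moveInRow_injective (hs₁.symm.trans (he.trans hs₂))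
  · exact absurd he (shift_ne_shift hM₂ hij hval hb h₁ h₂)
  · exact absurd he.symm (shift_ne_shift hM₁ hij hval hb h₂ h₁)
  · obtain ⟨c₁, -, -, -, -, -, -, hs₁, hfirst₁, -⟩ := exists_reverseArc hM₁ hij hval hb h₁
    obtain ⟨c₂, -, -, -, -, -, -, hs₂, hfirst₂, -⟩ := exists_reverseArc hM₂ hij hval hb h₂
    rw [he] at hfirst₁
    obtain rfl : c₁ = c₂ := Fin.ext (Nat.succ_injective (hfirst₁.unique hfirst₂))
    exact reverseArc_injective (hs₁.symm.trans (he.trans hs₂))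

end shift

lemma N2_le_N2_unitTransfer {a' b : Fin n → ℕ} {i j : Fin n} (hij : i ≠ j)
    (hval : a' i + 1 = a' j) (hb : b i ≤ b j) :
    N2 a' b ≤ N2 (update (update a' i (a' i + 1)) j (a' j - 1)) b :=
  Nat.card_le_card_of_injective (fun M => ⟨shift i j M.1, IsRealization.shift M.2 hij hval hb⟩)
    fun M₁ M₂ he => Subtype.ext (shift_injOn hij hval hb M₁.2 M₂.2 (congrArg Subtype.val he))

end DigraphTransfer

theorem stmt17 {n : ℕ} (a a' b : Fin n → ℕ) (i j : Fin n)
    (hd' : Digraphic a' b) (hb : Nondecreasing b)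
    (hij : i < j) (hval : a' i + 1 = a' j)
    (ha : a = Function.update (Function.update a' i (a' i + 1)) j (a' j - 1)) :
    Digraphic a b ∧ N2 a' b ≤ N2 a b := by
  subst ha
  have key := DigraphTransfer.N2_le_N2_unitTransfer hij.ne hval (hb i j hij.le)
  exact ⟨hd'.trans_le key, key⟩
end

section
/- Let (a,b) be a digraphic list with b nondecreasing and let σ be a permutation such that a_σ = (a_{σ(1)},…,a_{σ(n)}) is nonincreasing (so (a_σ, b) is the opposed list). Then (a_σ, b) is digraphic and N_2(a_σ, b) ≥ N_2(a,b): the opposed ordering maximizes the number of digraph realizations over all permutations of a. -/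
open Finset

/-!
Exchanging column sums `a p ≤ a q` at positions with `b p ≤ b q` never decreases `N2`, and
any arrangement of `a` reaches the nonincreasing one through such exchanges, since each of them
lowers `∑ i, i * a i`.

For one exchange, group the realizations by their entries outside rows and columns `p, q`
together with the entries at `(p, q)` and `(q, p)`. Within a group, columns `p, q` and rows `p, q`
are filled independently, so the group has `R * C` elements, where `R` and `C` count pairs of
0-1 vectors with prescribed pointwise sums and prescribed weights. The exchange only trades the
row factors of the groups with `(M p q, M q p) = (1, 0)` and `(0, 1)`, and the claim becomes
`A₂ B₁ + A₁ B₂ ≤ A₁ B₁ + A₂ B₂` for `A₁ ≤ A₂`, `B₁ ≤ B₂`. These two inequalities say that among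
pairs `(u, v)` with fixed `u + v`, those with more balanced weights are more numerous; they
follow by double counting the moves of a single `1` from `v` to `u`.
-/

open Function

namespace DigraphRealization

section FillPairs

variable {ι : Type*} [Fintype ι]

def weight (u : ι → Bool) : ℕ := ∑ i, (u i).toNat

lemma weight_eq_card (u : ι → Bool) : weight u = #{i | u i = true} := by
  simp only [weight, card_filter]
  exact sum_congr rfl fun i _ => by cases u i <;> rfl

variable [DecidableEq ι]

lemma weight_update (u : ι → Bool) (i : ι) (b : Bool) :
    weight (update u i b) + (u i).toNat = weight u + b.toNat := by
  simp only [weight, apply_update (fun _ => Bool.toNat), sum_update_of_mem (mem_univ i)]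
  rw [← add_sum_erase _ _ (mem_univ i), ← sdiff_singleton_eq_erase]
  ring

lemma weight_add_eq_of_eq_off {p q : ι} (hpq : p ≠ q) {f g : ι → Bool}
    (h : ∀ i, i ≠ p → i ≠ q → f i = g i) :
    weight f + (g p).toNat + (g q).toNat = weight g + (f p).toNat + (f q).toNat := by
  have split : ∀ u : ι → Bool,
      weight u = ∑ i ∈ {p, q}ᶜ, (u i).toNat + ((u p).toNat + (u q).toNat) := fun u => by
    rw [weight, ← sum_compl_add_sum {p, q}, sum_pair hpq]
  have hc : ∑ i ∈ {p, q}ᶜ, (f i).toNat = ∑ i ∈ {p, q}ᶜ, (g i).toNat :=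
    sum_congr rfl fun i hi => by
      simp only [mem_compl, mem_insert, mem_singleton, not_or] at hi
      rw [h i hi.1 hi.2]
  rw [split f, split g, hc]
  ring

lemma weight_eq_card_add_card (u v : ι → Bool) :
    weight v = #{i | u i = false ∧ v i = true} + #{i | u i = true ∧ v i = true} := by
  rw [weight_eq_card, ← card_union_of_disjoint (disjoint_filter.2 fun i _ h h' => by simp_all)]
  congr 1
  ext i
  cases h : u i <;> simp [h]

-- The offsets `ε`, `δ` stand in for the truncated subtraction `x - ε`.
def fillPairs (base tgt : ι → ℕ) (x : ℕ) (ε : Bool) (y : ℕ) (δ : Bool) :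
    Finset ((ι → Bool) × (ι → Bool)) :=
  {uv | (∀ i, base i + (uv.1 i).toNat + (uv.2 i).toNat = tgt i) ∧
    weight uv.1 + ε.toNat = x ∧ weight uv.2 + δ.toNat = y}

variable {base tgt : ι → ℕ}

lemma mem_fillPairs {x y : ℕ} {ε δ : Bool} {uv : (ι → Bool) × (ι → Bool)} :
    uv ∈ fillPairs base tgt x ε y δ ↔
      (∀ i, base i + (uv.1 i).toNat + (uv.2 i).toNat = tgt i) ∧
        weight uv.1 + ε.toNat = x ∧ weight uv.2 + δ.toNat = y := by
  simp [fillPairs]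

lemma card_fillPairs_comm (x y : ℕ) (ε δ : Bool) :
    #(fillPairs base tgt x ε y δ) = #(fillPairs base tgt y δ x ε) := by
  have swap_mem : ∀ {x y ε δ} {uv : (ι → Bool) × (ι → Bool)},
      uv ∈ fillPairs base tgt x ε y δ → uv.swap ∈ fillPairs base tgt y δ x ε := by
    intro x y ε δ uv h
    obtain ⟨hpat, hx, hy⟩ := mem_fillPairs.1 h
    refine mem_fillPairs.2 ⟨fun i => ?_, hy, hx⟩
    have := hpat i
    simp only [Prod.fst_swap, Prod.snd_swap]
    omega
  exact card_nbij' Prod.swap Prod.swap (fun _ h => swap_mem h) (fun _ h => swap_mem h)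
    (fun _ _ => rfl) (fun _ _ => rfl)

lemma fillPairs_succ_true_left (x y : ℕ) (δ : Bool) :
    fillPairs base tgt (x + 1) true y δ = fillPairs base tgt x false y δ := by
  ext uv
  simp [mem_fillPairs]

lemma fillPairs_succ_true_right (x y : ℕ) (ε : Bool) :
    fillPairs base tgt x ε (y + 1) true = fillPairs base tgt x ε y false := by
  ext uv
  simp [mem_fillPairs]

lemma fillPairs_zero_true_left (y : ℕ) (δ : Bool) : fillPairs base tgt 0 true y δ = ∅ := by
  ext uv
  simp [mem_fillPairs]

lemma card_filter_and_eq_of_mem_fillPairs {x y : ℕ} {ε δ : Bool}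
    {uv : (ι → Bool) × (ι → Bool)} (h : uv ∈ fillPairs base tgt x ε y δ) :
    #{i | uv.1 i = true ∧ uv.2 i = true} = #{i | base i + 2 = tgt i} := by
  obtain ⟨hpat, -, -⟩ := mem_fillPairs.1 h
  congr 1
  ext i
  have := hpat i
  cases h₁ : uv.1 i <;> cases h₂ : uv.2 i <;> simp [h₁, h₂] at this ⊢ <;> omega

def moveLeft (i : ι) (uv : (ι → Bool) × (ι → Bool)) : (ι → Bool) × (ι → Bool) :=
  (update uv.1 i true, update uv.2 i false)

def Transfer (x y : (ι → Bool) × (ι → Bool)) : Prop :=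
  ∃ i, x.1 i = false ∧ x.2 i = true ∧ y = moveLeft i x

instance : DecidableRel (Transfer (ι := ι)) := fun _ _ => by unfold Transfer; infer_instance

lemma moveLeft_mem_fillPairs {s t : ℕ} {ε δ : Bool} {x : (ι → Bool) × (ι → Bool)}
    {i : ι} (hx : x ∈ fillPairs base tgt s ε (t + 1) δ) (hu : x.1 i = false)
    (hv : x.2 i = true) :
    moveLeft i x ∈ fillPairs base tgt (s + 1) ε t δ := by
  obtain ⟨hpat, hs, ht⟩ := mem_fillPairs.1 hx
  have hs' := weight_update x.1 i true
  have ht' := weight_update x.2 i false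
  simp only [hu, hv, Bool.toNat_true, Bool.toNat_false] at hs' ht'
  refine mem_fillPairs.2
    ⟨fun j => ?_, by simp only [moveLeft]; omega, by simp only [moveLeft]; omega⟩
  by_cases hji : j = i
  · subst hji
    have := hpat j
    simp_all [moveLeft]
  · simpa [moveLeft, update_of_ne hji] using hpat j

theorem card_fillPairs_le_of_le {s t : ℕ} (hst : s ≤ t) :
    #(fillPairs base tgt s false (t + 1) false) ≤
      #(fillPairs base tgt (s + 1) false t false) := by
  set A := fillPairs base tgt s false (t + 1) false
  set B := fillPairs base tgt (s + 1) false t false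
  set g := #{i | base i + 2 = tgt i}
  -- Along `Transfer`, each `x ∈ A` has `t + 1 - g` successors in `B` and each `y ∈ B` has at
  -- most `s + 1 - g` predecessors in `A`.
  obtain hA | ⟨x₀, hx₀⟩ := A.eq_empty_or_nonempty
  · simp [hA]
  have hg : g ≤ s := by
    have hw := weight_eq_card_add_card x₀.2 x₀.1
    have hs : weight x₀.1 = s := by simpa using (mem_fillPairs.1 hx₀).2.1
    simp only [and_comm (a := x₀.2 _ = true), card_filter_and_eq_of_mem_fillPairs hx₀] at hw
    omega
  have out_deg : ∀ x ∈ A, t + 1 - g ≤ #(B.bipartiteAbove Transfer x) := by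
    intro x hx
    have hw := weight_eq_card_add_card x.1 x.2
    have ht : weight x.2 = t + 1 := by simpa using (mem_fillPairs.1 hx).2.2
    rw [card_filter_and_eq_of_mem_fillPairs hx] at hw
    calc t + 1 - g = #{i | x.1 i = false ∧ x.2 i = true} := by omega
      _ ≤ _ := card_le_card_of_injOn (moveLeft · x)
          (fun i hi => by
            simp only [coe_filter, mem_univ, true_and] at hi
            exact (mem_bipartiteAbove Transfer).2
              ⟨moveLeft_mem_fillPairs hx hi.1 hi.2, i, hi.1, hi.2, rfl⟩)
          (fun i hi j _ hij => by
            by_contra hne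
            have := congrFun (congrArg Prod.fst hij) i
            simp only [moveLeft, update_self, update_of_ne hne] at this
            simp_all)
  have in_deg : ∀ y ∈ B, #(A.bipartiteBelow Transfer y) ≤ s + 1 - g := by
    intro y hy
    have hw := weight_eq_card_add_card y.2 y.1
    have hs : weight y.1 = s + 1 := by simpa using (mem_fillPairs.1 hy).2.1
    simp only [and_comm (a := y.2 _ = true), card_filter_and_eq_of_mem_fillPairs hy] at hw
    calc #(A.bipartiteBelow Transfer y)
        ≤ #(({i | y.2 i = false ∧ y.1 i = true} : Finset ι).image
            fun i => (update y.1 i false, update y.2 i true)) := by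
          refine card_le_card fun x hx => ?_
          obtain ⟨-, i, hu, hv, rfl⟩ := (mem_bipartiteBelow Transfer).1 hx
          refine mem_image.2 ⟨i, mem_filter.2 ⟨mem_univ _, by simp [moveLeft]⟩, ?_⟩
          simp only [moveLeft, update_idem]
          rw [← hu, ← hv, update_eq_self, update_eq_self]
      _ ≤ s + 1 - g := card_image_le.trans (by omega)
  have key := card_mul_le_card_mul Transfer out_deg in_deg
  have hpos : 0 < t + 1 - g := by omega
  exact le_of_mul_le_mul_right (key.trans (Nat.mul_le_mul_left _ (by omega))) hpos

theorem card_fillPairs_true_false_le {x y : ℕ} (hxy : x ≤ y) :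
    #(fillPairs base tgt x true y false) ≤ #(fillPairs base tgt x false y true) := by
  obtain _ | s := x
  · simp [fillPairs_zero_true_left]
  obtain ⟨t, rfl⟩ : ∃ t, y = t + 1 := ⟨y - 1, by omega⟩
  rw [fillPairs_succ_true_left, fillPairs_succ_true_right]
  exact card_fillPairs_le_of_le (by omega)

end FillPairs

section Realizations

variable {n : ℕ}

lemma rowSum_eq_weight (M : Fin n → Fin n → Bool) (i : Fin n) : rowSum M i = weight (M i) :=
  sum_congr rfl fun j _ => by cases M i j <;> rfl

lemma colSum_eq_rowSum_flip (M : Fin n → Fin n → Bool) (j : Fin n) :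
    colSum M j = rowSum (flip M) j := rfl

def realizations (a b : Fin n → ℕ) : Finset (Fin n → Fin n → Bool) :=
  {M | (∀ i, M i i = false) ∧ (∀ i, rowSum M i = b i) ∧ (∀ j, colSum M j = a j)}

lemma N2_eq_card_realizations (a b : Fin n → ℕ) : N2 a b = #(realizations a b) := by
  rw [N2, Nat.card_eq_fintype_card, Fintype.card_subtype]
  rfl

variable (p q : Fin n)

def outside (M : Fin n → Fin n → Bool) : Fin n → Fin n → Bool :=
  fun i j => if i = p ∨ i = q ∨ j = p ∨ j = q ∨ i = j then false else M i j

-- Vanishing at `p` and `q` forces the vectors of `fillPairs _ (dropPQ p q b) ..` to vanish there.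
def dropPQ (b : Fin n → ℕ) : Fin n → ℕ := fun i => if i = p ∨ i = q then 0 else b i

def assemble (U : Fin n → Fin n → Bool) (ε η : Bool) (u v w z : Fin n → Bool) :
    Fin n → Fin n → Bool :=
  fun i j =>
    if i = p then (if j = p then false else if j = q then ε else w j)
    else if i = q then (if j = p then η else if j = q then false else z j)
    else if j = p then u i else if j = q then v i else U i j

def pqLines (M : Fin n → Fin n → Bool) :
    ((Fin n → Bool) × (Fin n → Bool)) × ((Fin n → Bool) × (Fin n → Bool)) :=
  ((fun i => if i = p ∨ i = q then false else M i p,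
    fun i => if i = p ∨ i = q then false else M i q),
   (fun j => if j = p ∨ j = q then false else M p j,
    fun j => if j = p ∨ j = q then false else M q j))

variable {p q}

lemma outside_apply_eq_false {U : Fin n → Fin n → Bool} (hU : outside p q U = U) {i j : Fin n}
    (h : i = p ∨ i = q ∨ j = p ∨ j = q ∨ i = j) : U i j = false := by
  rw [← hU]
  simp [outside, h]

lemma outside_flip {U : Fin n → Fin n → Bool} (hU : outside p q U = U) :
    outside p q (flip U) = flip U := by
  ext i j
  simp only [outside, flip]
  split_ifs with h
  · exact (outside_apply_eq_false hU (by tauto)).symm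
  · rfl

lemma outside_outside (M : Fin n → Fin n → Bool) :
    outside p q (outside p q M) = outside p q M := by
  ext i j
  simp only [outside]
  split_ifs <;> rfl

lemma flip_assemble (U : Fin n → Fin n → Bool) (ε η : Bool) (u v w z : Fin n → Bool) :
    flip (assemble p q U ε η u v w z) = assemble p q (flip U) η ε w z u v := by
  ext i j
  simp only [flip, assemble]
  split_ifs <;> simp_all

variable {U : Fin n → Fin n → Bool} {ε η : Bool} {u v w z : Fin n → Bool}

lemma rowSum_assemble_of_ne (hpq : p ≠ q) (hU : outside p q U = U) {i : Fin n}
    (hip : i ≠ p) (hiq : i ≠ q) :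
    rowSum (assemble p q U ε η u v w z) i = rowSum U i + (u i).toNat + (v i).toNat := by
  have := weight_add_eq_of_eq_off hpq (f := assemble p q U ε η u v w z i) (g := U i)
    fun j hjp hjq => by simp [assemble, hip, hiq, hjp, hjq]
  rw [outside_apply_eq_false hU (by tauto), outside_apply_eq_false hU (by tauto)] at this
  simp_all [rowSum_eq_weight, assemble, hpq.symm]

lemma rowSum_assemble_left (hpq : p ≠ q) (hw : w p = false) (hw' : w q = false) :
    rowSum (assemble p q U ε η u v w z) p = weight w + ε.toNat := by
  have := weight_add_eq_of_eq_off hpq (f := assemble p q U ε η u v w z p) (g := w)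
    fun j hjp hjq => by simp [assemble, hjp, hjq]
  simp_all [rowSum_eq_weight, assemble, hpq.symm]

lemma rowSum_assemble_right (hpq : p ≠ q) (hz : z p = false) (hz' : z q = false) :
    rowSum (assemble p q U ε η u v w z) q = weight z + η.toNat := by
  have := weight_add_eq_of_eq_off hpq (f := assemble p q U ε η u v w z q) (g := z)
    fun j hjp hjq => by simp [assemble, hjp, hjq, hpq.symm]
  simp_all [rowSum_eq_weight, assemble, hpq.symm]

lemma rowSum_eq_zero_of_outside_eq (hU : outside p q U = U) {i : Fin n} (hi : i = p ∨ i = q) :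
    rowSum U i = 0 := by
  simp [rowSum_eq_weight, weight, fun j => outside_apply_eq_false hU (j := j) (by tauto)]

lemma rowSums_assemble_iff (hpq : p ≠ q) (hU : outside p q U = U)
    (hu : u p = false ∧ u q = false) (hv : v p = false ∧ v q = false)
    (hw : w p = false ∧ w q = false) (hz : z p = false ∧ z q = false) {b : Fin n → ℕ} :
    (∀ i, rowSum (assemble p q U ε η u v w z) i = b i) ↔
      (∀ i, rowSum U i + (u i).toNat + (v i).toNat = dropPQ p q b i) ∧
        weight w + ε.toNat = b p ∧ weight z + η.toNat = b q := by
  rw [← rowSum_assemble_left hpq hw.1 hw.2 (U := U) (η := η) (u := u) (v := v) (z := z),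
    ← rowSum_assemble_right hpq hz.1 hz.2 (U := U) (ε := ε) (u := u) (v := v) (w := w)]
  constructor
  · intro h
    refine ⟨fun i => ?_, h p, h q⟩
    by_cases hi : i = p ∨ i = q
    · rcases hi with rfl | rfl <;>
        simp [dropPQ, rowSum_eq_zero_of_outside_eq hU, hu, hv]
    · push Not at hi
      rw [dropPQ, if_neg (by tauto), ← h i, rowSum_assemble_of_ne hpq hU hi.1 hi.2]
  · rintro ⟨h, hp, hq⟩ i
    by_cases hip : i = p
    · rwa [hip]
    by_cases hiq : i = q
    · rwa [hiq]
    rw [rowSum_assemble_of_ne hpq hU hip hiq, h i, dropPQ, if_neg (by tauto)]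

lemma colSums_assemble_iff (hpq : p ≠ q) (hU : outside p q U = U)
    (hu : u p = false ∧ u q = false) (hv : v p = false ∧ v q = false)
    (hw : w p = false ∧ w q = false) (hz : z p = false ∧ z q = false) {a : Fin n → ℕ} :
    (∀ j, colSum (assemble p q U ε η u v w z) j = a j) ↔
      (∀ j, colSum U j + (w j).toNat + (z j).toNat = dropPQ p q a j) ∧
        weight u + η.toNat = a p ∧ weight v + ε.toNat = a q := by
  simp only [colSum_eq_rowSum_flip, flip_assemble]
  exact rowSums_assemble_iff hpq (outside_flip hU) hw hz hu hv

lemma assemble_mem_realizations_iff (hpq : p ≠ q) (hU : outside p q U = U)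
    (hu : u p = false ∧ u q = false) (hv : v p = false ∧ v q = false)
    (hw : w p = false ∧ w q = false) (hz : z p = false ∧ z q = false) {a b : Fin n → ℕ} :
    assemble p q U ε η u v w z ∈ realizations a b ↔
      (u, v) ∈ fillPairs (rowSum U) (dropPQ p q b) (a p) η (a q) ε ∧
      (w, z) ∈ fillPairs (colSum U) (dropPQ p q a) (b p) ε (b q) η := by
  have hdiag : ∀ i, assemble p q U ε η u v w z i i = false := by
    intro i
    simp only [assemble]
    split_ifs <;> simp_all [outside_apply_eq_false hU]
  simp only [realizations, mem_filter, mem_univ, true_and, mem_fillPairs, hdiag,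
    rowSums_assemble_iff hpq hU hu hv hw hz, colSums_assemble_iff hpq hU hu hv hw hz]
  tauto

lemma assemble_pqLines {M : Fin n → Fin n → Bool} (hM : ∀ i, M i i = false) :
    assemble p q (outside p q M) (M p q) (M q p) (pqLines p q M).1.1 (pqLines p q M).1.2
      (pqLines p q M).2.1 (pqLines p q M).2.2 = M := by
  ext i j
  simp only [assemble, pqLines, outside]
  split_ifs <;> simp_all

lemma pqLines_assemble (hpq : p ≠ q) (hu : u p = false ∧ u q = false)
    (hv : v p = false ∧ v q = false) (hw : w p = false ∧ w q = false)
    (hz : z p = false ∧ z q = false) :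
    pqLines p q (assemble p q U ε η u v w z) = ((u, v), (w, z)) := by
  have hqp := hpq.symm
  simp only [pqLines, assemble, Prod.mk.injEq]
  refine ⟨⟨?_, ?_⟩, ?_, ?_⟩ <;> ext i <;> by_cases hip : i = p <;> by_cases hiq : i = q <;>
    simp_all

lemma outside_assemble (hU : outside p q U = U) :
    outside p q (assemble p q U ε η u v w z) = U := by
  ext i j
  simp only [outside, assemble]
  split_ifs <;> simp_all [outside_apply_eq_false hU]

lemma vanish_of_mem_fillPairs {base b : Fin n → ℕ} {x y : ℕ} {ε δ : Bool}
    {uv : (Fin n → Bool) × (Fin n → Bool)}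
    (h : uv ∈ fillPairs base (dropPQ p q b) x ε y δ) :
    (uv.1 p = false ∧ uv.1 q = false) ∧ (uv.2 p = false ∧ uv.2 q = false) := by
  have hp := (mem_fillPairs.1 h).1 p
  have hq := (mem_fillPairs.1 h).1 q
  simp only [dropPQ, true_or, or_true, if_true, Nat.add_eq_zero_iff, Bool.toNat_eq_zero] at hp hq
  tauto

variable (p q) in
def fiber (a b : Fin n → ℕ) (U : Fin n → Fin n → Bool) (ε η : Bool) :
    Finset (Fin n → Fin n → Bool) :=
  {M ∈ realizations a b | outside p q M = U ∧ M p q = ε ∧ M q p = η}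

lemma card_fiber (hpq : p ≠ q) (hU : outside p q U = U) (a b : Fin n → ℕ) :
    #(fiber p q a b U ε η) = #(fillPairs (rowSum U) (dropPQ p q b) (a p) η (a q) ε) *
      #(fillPairs (colSum U) (dropPQ p q a) (b p) ε (b q) η) := by
  rw [← card_product]
  refine card_nbij' (pqLines p q) (fun x => assemble p q U ε η x.1.1 x.1.2 x.2.1 x.2.2)
    (fun M hM => ?_) (fun x hx => ?_) (fun M hM => ?_) (fun x hx => ?_)
  · obtain ⟨hMr, rfl, rfl, rfl⟩ := mem_filter.1 hM
    rw [← assemble_pqLines (p := p) (q := q) (mem_filter.1 hMr).2.1,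
      assemble_mem_realizations_iff hpq hU (by simp [pqLines]) (by simp [pqLines])
        (by simp [pqLines]) (by simp [pqLines])] at hMr
    exact mem_product.2 hMr
  · obtain ⟨hx₁, hx₂⟩ := mem_product.1 hx
    obtain ⟨hu, hv⟩ := vanish_of_mem_fillPairs hx₁
    obtain ⟨hw, hz⟩ := vanish_of_mem_fillPairs hx₂
    exact mem_filter.2 ⟨(assemble_mem_realizations_iff hpq hU hu hv hw hz).2 ⟨hx₁, hx₂⟩,
      outside_assemble hU, by simp [assemble, hpq.symm], by simp [assemble, hpq.symm]⟩
  · obtain ⟨hMr, rfl, rfl, rfl⟩ := mem_filter.1 hM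
    exact assemble_pqLines (mem_filter.1 hMr).2.1
  · obtain ⟨hx₁, hx₂⟩ := mem_product.1 hx
    obtain ⟨hu, hv⟩ := vanish_of_mem_fillPairs hx₁
    obtain ⟨hw, hz⟩ := vanish_of_mem_fillPairs hx₂
    exact pqLines_assemble hpq hu hv hw hz

lemma fiber_eq_empty (hU : outside p q U ≠ U) (a b : Fin n → ℕ) :
    fiber p q a b U ε η = ∅ := by
  refine eq_empty_of_forall_notMem fun M hM => hU ?_
  obtain ⟨-, rfl, -, -⟩ := mem_filter.1 hM
  exact outside_outside M

variable (p q) in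
lemma card_realizations_eq_sum_card_fiber (a b : Fin n → ℕ) :
    #(realizations a b) = ∑ U, ∑ ε, ∑ η, #(fiber p q a b U ε η) := by
  rw [card_eq_sum_card_fiberwise (f := fun M => (outside p q M, M p q, M q p)) (t := univ)
    fun _ _ => mem_univ _]
  simp only [Fintype.sum_prod_type, Prod.mk.injEq, fiber]

end Realizations

lemma sum_bool_rearrangement {r c : Bool → Bool → ℕ} (hr : r true false ≤ r false true)
    (hc : c true false ≤ c false true) :
    ∑ ε, ∑ η, r η ε * c ε η ≤ ∑ ε, ∑ η, r ε η * c ε η := by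
  simp only [Fintype.sum_bool]
  nlinarith [Nat.mul_le_mul hr hc]

theorem N2_le_N2_comp_swap {n : ℕ} {p q : Fin n} (hpq : p ≠ q) {a b : Fin n → ℕ}
    (ha : a p ≤ a q) (hb : b p ≤ b q) : N2 a b ≤ N2 (a ∘ Equiv.swap p q) b := by
  simp only [N2_eq_card_realizations, card_realizations_eq_sum_card_fiber p q]
  refine sum_le_sum fun U _ => ?_
  by_cases hU : outside p q U = U
  swap
  · simp [fiber_eq_empty hU]
  have hdrop : dropPQ p q (a ∘ Equiv.swap p q) = dropPQ p q a := by
    ext i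
    simp only [dropPQ, Function.comp_apply]
    split_ifs with h
    · rfl
    · push Not at h
      rw [Equiv.swap_apply_of_ne_of_ne h.1 h.2]
  simp only [card_fiber hpq hU, hdrop, Function.comp_apply, Equiv.swap_apply_left,
    Equiv.swap_apply_right]
  simp_rw [card_fillPairs_comm (a q) (a p)]
  exact sum_bool_rearrangement (card_fillPairs_true_false_le ha) (card_fillPairs_true_false_le hb)

section Sorting

variable {n : ℕ}

def potential (c : Fin n → ℕ) : ℕ := ∑ i : Fin n, (i : ℕ) * c i

lemma potential_comp_swap_lt {c : Fin n → ℕ} {p q : Fin n} (hpq : p < q) (hc : c p < c q) :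
    potential (c ∘ Equiv.swap p q) < potential c := by
  have hp : (p : ℕ) < q := hpq
  have reindex : potential (c ∘ Equiv.swap p q) = ∑ i, (Equiv.swap p q i : ℕ) * c i := by
    rw [potential, ← Equiv.sum_comp (Equiv.swap p q)]
    simp
  have off_pair :
      ∑ i ∈ {p, q}ᶜ, (Equiv.swap p q i : ℕ) * c i = ∑ i ∈ {p, q}ᶜ, (i : ℕ) * c i :=
    sum_congr rfl fun i hi => by
      simp only [mem_compl, mem_insert, mem_singleton, not_or] at hi
      rw [Equiv.swap_apply_of_ne_of_ne hi.1 hi.2]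
  rw [reindex, potential, ← sum_compl_add_sum {p, q},
    ← sum_compl_add_sum {p, q} (fun i => (i : ℕ) * c i), sum_pair hpq.ne, sum_pair hpq.ne,
    off_pair, Equiv.swap_apply_left, Equiv.swap_apply_right]
  nlinarith

lemma comp_eq_comp_of_nonincreasing {a : Fin n → ℕ} {σ τ : Equiv.Perm (Fin n)}
    (hσ : Nonincreasing (a ∘ σ)) (hτ : Nonincreasing (a ∘ τ)) : a ∘ τ = a ∘ σ :=
  Tuple.unique_monotone (f := OrderDual.toDual ∘ a) hτ hσ

theorem N2_comp_le_of_nonincreasing {a b : Fin n → ℕ} (hb : Nondecreasing b)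
    {σ : Equiv.Perm (Fin n)} (hσ : Nonincreasing (a ∘ σ)) (τ : Equiv.Perm (Fin n)) :
    N2 (a ∘ τ) b ≤ N2 (a ∘ σ) b := by
  induction h : potential (a ∘ τ) using Nat.strong_induction_on generalizing τ with
  | _ m ih =>
  by_cases hτ : Nonincreasing (a ∘ τ)
  · rw [comp_eq_comp_of_nonincreasing hσ hτ]
  obtain ⟨p, q, hle, hlt⟩ : ∃ p q, p ≤ q ∧ a (τ p) < a (τ q) := by
    simpa [Nonincreasing] using hτ
  have hpq : p < q := hle.lt_of_ne (by rintro rfl; exact lt_irrefl _ hlt)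
  calc N2 (a ∘ τ) b ≤ N2 (a ∘ τ ∘ Equiv.swap p q) b :=
        N2_le_N2_comp_swap hpq.ne hlt.le (hb p q hle)
    _ ≤ N2 (a ∘ σ) b :=
        ih _ (h ▸ potential_comp_swap_lt (c := a ∘ τ) hpq hlt) (τ * Equiv.swap p q) rfl

end Sorting

end DigraphRealization

theorem stmt18 {n : ℕ} (a b : Fin n → ℕ) (σ : Equiv.Perm (Fin n))
    (hd : Digraphic a b) (hb : Nondecreasing b)
    (hmono : Nonincreasing (a ∘ σ)) :
    Digraphic (a ∘ σ) b ∧ N2 a b ≤ N2 (a ∘ σ) b := by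
  have hle : N2 a b ≤ N2 (a ∘ σ) b :=
    DigraphRealization.N2_comp_le_of_nonincreasing hb hmono 1
  exact ⟨hd.trans_le hle, hle⟩
end
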